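/- arXiv:2106.07215 — 2 statements merged into one kernel-verified Lean document; each statement's English description precedes it below -/
import Mathlib

section
/- Let p be an odd prime and let γ be a p-core. The set of partitions of |γ| + p whose p-core is γ (the block of weight 1) has exactly p elements, is totally ordered by the dominance order, and contains exactly one p-singular partition, namely its minimum with respect to the dominance order. -/
namespace ArxivW2

/-- A partition of a natural number, given by its (weakly decreasing, finitely
supported) sequence of parts, `part i` being the `(i+1)`-st part. -/
structure PartitionNat : Type where
  part : ℕ → ℕ
  antitone : Antitone part
  finite_support : (Function.support part).Finite

namespace PartitionNat

/-- The rank `|λ|` of a partition: the sum of its parts. -/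
noncomputable def size (μ : PartitionNat) : ℕ := ∑ᶠ i, μ.part i

/-- The number of nonzero parts of a partition. -/
noncomputable def len (μ : PartitionNat) : ℕ := (Function.support μ.part).ncard

/-- The `(j+1)`-st part of the conjugate partition: `λ'_{j+1} = #{i : λ_i ≥ j+1}`. -/
noncomputable def conj (μ : PartitionNat) (j : ℕ) : ℕ := {i : ℕ | j + 1 ≤ μ.part i}.ncard

/-- A partition is self-conjugate if it equals its conjugate. -/
def SelfConj (μ : PartitionNat) : Prop := ∀ j, μ.part j = μ.conj j

/-- `(i, j)` (0-indexed) is a node of the Young diagram of `μ`. -/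
def IsNode (μ : PartitionNat) (i j : ℕ) : Prop := j < μ.part i

/-- The hook length of the (0-indexed) node `(i,j)`:
`h = λ_{i+1} + λ'_{j+1} − (i+1) − (j+1) + 1`. -/
noncomputable def hook (μ : PartitionNat) (i j : ℕ) : ℕ := μ.part i + μ.conj j - (i + j + 1)

/-- A partition is a `p`-core if no hook length of a node is divisible by `p`. -/
def IsCore (p : ℕ) (μ : PartitionNat) : Prop := ∀ i j, μ.IsNode i j → ¬ p ∣ μ.hook i j

/-- The `p`-weight of a partition: the number of nodes whose hook length is
divisible by `p`. -/
noncomputable def pweight (p : ℕ) (μ : PartitionNat) : ℕ :=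
  {x : ℕ × ℕ | μ.IsNode x.1 x.2 ∧ p ∣ μ.hook x.1 x.2}.ncard

/-- The `N`-bead beta-set `B_N(λ) = {λ_i + N − i : 1 ≤ i ≤ N}` of a partition
(meaningful when `N ≥ len λ`). -/
def betaSet (N : ℕ) (μ : PartitionNat) : Finset ℕ :=
  (Finset.range N).image fun i => μ.part i + (N - 1 - i)

/-- A partition is `p`-regular if no nonzero part is repeated `p` or more times. -/
def Regular (p : ℕ) (μ : PartitionNat) : Prop :=
  ∀ i, μ.part i ≠ 0 → μ.part (i + p - 1) < μ.part i

end PartitionNat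

open PartitionNat

/-- `γ` is the `p`-core of `lam`: `γ` is a `p`-core, and for some `N` at least the
number of parts of both, the `N`-bead beta-sets of `lam` and `γ` have the same number
of elements in each residue class mod `p`. -/
def HasCore (p : ℕ) (lam gam : PartitionNat) : Prop :=
  IsCore p gam ∧ ∃ N : ℕ, lam.len ≤ N ∧ gam.len ≤ N ∧ ∀ r : ℕ,
    ((betaSet N lam).filter fun b => b % p = r).card =
      ((betaSet N gam).filter fun b => b % p = r).card

/-- Membership in the `p`-block of weight `w` with `p`-core `gam`. -/
def InBlock (p w : ℕ) (gam lam : PartitionNat) : Prop :=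
  lam.size = gam.size + w * p ∧ HasCore p lam gam

/-- The dominance order: `lam ⊴ mu`. -/
def Dom (lam mu : PartitionNat) : Prop :=
  ∀ k : ℕ, ∑ i ∈ Finset.range k, lam.part i ≤ ∑ i ∈ Finset.range k, mu.part i

/-- `mu` is obtained from `lam` by removing a `p`-rim-hook of leg length `l`. -/
def RemoveHook (p : ℕ) (lam mu : PartitionNat) (l : ℕ) : Prop :=
  ∃ N b : ℕ, lam.len ≤ N ∧ mu.len ≤ N ∧ b ∈ betaSet N lam ∧ p ≤ b ∧
    b - p ∉ betaSet N lam ∧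
    betaSet N mu = insert (b - p) (betaSet N lam \ {b}) ∧
    l = ((betaSet N lam).filter fun x => b - p < x ∧ x < b).card

/-- `lam` belongs to the set `∂_l` of the weight-2 block of `gam`:
it lies in the block and some (equivalently, every) two-step `p`-rim-hook removal
sequence from `lam` down to `gam` has leg lengths `l₁, l₂` with `|l₁ − l₂| = l`. -/
def DelClass (p : ℕ) (gam : PartitionNat) (l : ℕ) (lam : PartitionNat) : Prop :=
  InBlock p 2 gam lam ∧ ∃ mu l1 l2, RemoveHook p lam mu l1 ∧ RemoveHook p mu gam l2 ∧
    max l1 l2 - min l1 l2 = l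

/-- `ρ 0 < ρ 1 < ⋯ < ρ (p−1)` is the increasing enumeration of the maxima of the
residue classes mod `p` in the `N`-bead beta-set of `gam`. -/
def IsRho (p N : ℕ) (gam : PartitionNat) (ρ : ℕ → ℕ) : Prop :=
  (∀ i j, i < j → j < p → ρ i < ρ j) ∧
  (∀ i, i < p → ρ i ∈ betaSet N gam ∧ ∀ b ∈ betaSet N gam, b % p = ρ i % p → b ≤ ρ i) ∧
  (∀ r, r < p → ∃ i, i < p ∧ ρ i % p = r)

/-- The beta-set of the partition `⟨i,j⟩` (`i < j`). -/
def pairBeta (p : ℕ) (B : Finset ℕ) (ρ : ℕ → ℕ) (i j : ℕ) : Finset ℕ :=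
  (B \ {ρ i, ρ j}) ∪ {ρ i + p, ρ j + p}

/-- The beta-set of the partition `⟨i⟩`. -/
def oneBeta (p : ℕ) (B : Finset ℕ) (ρ : ℕ → ℕ) (i : ℕ) : Finset ℕ :=
  (B \ {ρ i}) ∪ {ρ i + 2 * p}

/-- The beta-set of the partition `⟨i²⟩`. -/
def sqBeta (p : ℕ) (B : Finset ℕ) (ρ : ℕ → ℕ) (i : ℕ) : Finset ℕ :=
  (B \ {ρ i - p}) ∪ {ρ i + p}

/-- The pyramid entry `γ_{ij}` of the block, extended by `1` for `i > j` and `0`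
for `j ≥ p`. -/
def pyr (p : ℕ) (ρ : ℕ → ℕ) (i j : ℕ) : ℕ :=
  if j < i then 1 else if p ≤ j then 0 else if ρ j - ρ i < p then 1 else 0

/-- The beta-set of Fayers' partition `⌈i,j⌋` (for `0 ≤ i ≤ j ≤ p−1`, `i < p−1`),
defined by cases on the pyramid entries. -/
def fayersBeta (p : ℕ) (B : Finset ℕ) (ρ : ℕ → ℕ) (i j : ℕ) : Finset ℕ :=
  if i = j then
    (if pyr p ρ (i + 1) (i + 2) = 1 then pairBeta p B ρ (i + 1) (i + 2)
     else oneBeta p B ρ (i + 1))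
  else
    if pyr p ρ i (j + 1) = 1 then pairBeta p B ρ i (j + 1)
    else if pyr p ρ i j = 1 then oneBeta p B ρ i
    else if pyr p ρ (i + 1) j = 1 then sqBeta p B ρ j
    else pairBeta p B ρ (i + 1) j

/-- The set of `p`-BG-partitions in the block of weight `w` with core `gam`:
self-conjugate partitions in the block none of whose diagonal hook lengths is
divisible by `p`. -/
def BGset (p w : ℕ) (gam : PartitionNat) : Set PartitionNat :=
  {lam | InBlock p w gam lam ∧ SelfConj lam ∧ ∀ i, lam.IsNode i i → ¬ p ∣ lam.hook i i}



section Aux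
open Finset

-- lower set = range
lemma lower_eq_range (F : Finset ℕ) (h : ∀ j ∈ F, ∀ i, i < j → i ∈ F) :
    F = Finset.range F.card := by
  have key : ∀ x, x ∈ F ↔ x < F.card := by
    intro x
    constructor
    · intro hx
      by_contra hlt
      push_neg at hlt
      have : Finset.range (x+1) ⊆ F := by
        intro y hy
        simp only [Finset.mem_range] at hy
        rcases Nat.lt_or_ge y x with h'|h'
        · exact h x hx y h'
        · have : y = x := by omega
          subst this; exact hx
      have := Finset.card_le_card this
      simp at this; omega
    · intro hx
      by_contra hxF
      have : F ⊆ Finset.range x := by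
        intro y hy
        simp only [Finset.mem_range]
        by_contra hyx
        push_neg at hyx
        rcases Nat.eq_or_lt_of_le hyx with h'|h'
        · exact hxF (h' ▸ hy)
        · exact hxF (h y hy x h')
      have := Finset.card_le_card this
      simp at this; omega
  ext x; simp [key]

-- sums of distinct naturals
lemma sum_ge_triangle (K : Finset ℕ) : ∑ i ∈ Finset.range K.card, i ≤ ∑ i ∈ K, i := by
  induction K using Finset.strongInduction with
  | _ K ih =>
    rcases K.eq_empty_or_nonempty with rfl|hne
    · simp
    · have hM := K.max'_mem hne
      have hK : K = insert (K.max' hne) (K.erase (K.max' hne)) := by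
        simp [Finset.insert_erase hM]
      have hcard : (K.erase (K.max' hne)).card = K.card - 1 := Finset.card_erase_of_mem hM
      have h1 : ∑ i ∈ Finset.range (K.card - 1), i ≤ ∑ i ∈ K.erase (K.max' hne), i :=
        ih _ (Finset.erase_ssubset hM) |>.trans_eq' (by rw [hcard])
      have hMax : K.card - 1 ≤ K.max' hne := by
        have : K ⊆ Finset.range (K.max' hne + 1) := by
          intro x hx; simp only [Finset.mem_range]
          exact Nat.lt_succ_of_le (Finset.le_max' _ _ hx)
        have := Finset.card_le_card this
        simp at this; omega
      have hcard1 : 1 ≤ K.card := Finset.card_pos.mpr hne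
      calc ∑ i ∈ Finset.range K.card, i
          = ∑ i ∈ Finset.range (K.card - 1), i + (K.card - 1) := by
            conv_lhs => rw [show K.card = (K.card - 1) + 1 by omega]
            rw [Finset.sum_range_succ]
        _ ≤ ∑ i ∈ K.erase (K.max' hne), i + K.max' hne := by
            exact Nat.add_le_add h1 hMax
        _ = ∑ i ∈ K, i := by
            conv_rhs => rw [hK]
            rw [Finset.sum_insert (Finset.notMem_erase _ _)]; ring
lemma sum_eq_triangle (K : Finset ℕ) (h : ∑ i ∈ K, i = ∑ i ∈ Finset.range K.card, i) :
    K = Finset.range K.card := by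
  induction K using Finset.strongInduction with
  | _ K ih =>
    rcases K.eq_empty_or_nonempty with rfl|hne
    · simp
    · have hM := K.max'_mem hne
      set M := K.max' hne with hMdef
      have hKi : K = insert M (K.erase M) := by simp [Finset.insert_erase hM]
      have hcard : (K.erase M).card = K.card - 1 := Finset.card_erase_of_mem hM
      have hcard1 : 1 ≤ K.card := Finset.card_pos.mpr hne
      have h1 : ∑ i ∈ Finset.range (K.card - 1), i ≤ ∑ i ∈ K.erase M, i := by
        have := sum_ge_triangle (K.erase M); rwa [hcard] at this
      have hMax : K.card - 1 ≤ M := by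
        have : K ⊆ Finset.range (M + 1) := by
          intro x hx; simp only [Finset.mem_range]
          exact Nat.lt_succ_of_le (Finset.le_max' _ _ hx)
        have := Finset.card_le_card this; simp at this; omega
      have hsum : ∑ i ∈ K.erase M, i + M = ∑ i ∈ K, i := by
        conv_rhs => rw [hKi]; rw [Finset.sum_insert (Finset.notMem_erase _ _)]
        ring
      have hrange : ∑ i ∈ Finset.range K.card, i
          = ∑ i ∈ Finset.range (K.card - 1), i + (K.card - 1) := by
        conv_lhs => rw [show K.card = (K.card - 1) + 1 by omega]
        rw [Finset.sum_range_succ]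
      have hMeq : M = K.card - 1 := by omega
      have herase : ∑ i ∈ K.erase M, i = ∑ i ∈ Finset.range ((K.erase M).card), i := by
        rw [hcard]; omega
      have := ih (K.erase M) (Finset.erase_ssubset hM) herase
      have hfin : K = Finset.range ((K.card - 1) + 1) := by
        rw [Finset.range_add_one]
        calc K = insert M (K.erase M) := hKi
          _ = insert (K.card - 1) (Finset.range (K.card - 1)) := by rw [this, hcard, hMeq]
      rw [show K.card = (K.card - 1) + 1 by omega]
      exact hfin

lemma sum_eq_triangle_add_one (K : Finset ℕ)
    (h : ∑ i ∈ K, i = ∑ i ∈ Finset.range K.card, i + 1) :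
    1 ≤ K.card ∧ K = insert K.card (Finset.range (K.card - 1)) := by
  induction K using Finset.strongInduction with
  | _ K ih =>
    rcases K.eq_empty_or_nonempty with rfl|hne
    · simp at h
    · have hM := K.max'_mem hne
      set M := K.max' hne with hMdef
      have hKi : K = insert M (K.erase M) := by simp [Finset.insert_erase hM]
      have hcard : (K.erase M).card = K.card - 1 := Finset.card_erase_of_mem hM
      have hcard1 : 1 ≤ K.card := Finset.card_pos.mpr hne
      refine ⟨hcard1, ?_⟩
      have h1 : ∑ i ∈ Finset.range (K.card - 1), i ≤ ∑ i ∈ K.erase M, i := by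
        have := sum_ge_triangle (K.erase M); rwa [hcard] at this
      have hMax : K.card - 1 ≤ M := by
        have : K ⊆ Finset.range (M + 1) := by
          intro x hx; simp only [Finset.mem_range]
          exact Nat.lt_succ_of_le (Finset.le_max' _ _ hx)
        have := Finset.card_le_card this; simp at this; omega
      have hsum : ∑ i ∈ K.erase M, i + M = ∑ i ∈ K, i := by
        conv_rhs => rw [hKi]; rw [Finset.sum_insert (Finset.notMem_erase _ _)]
        ring
      have hrange : ∑ i ∈ Finset.range K.card, i
          = ∑ i ∈ Finset.range (K.card - 1), i + (K.card - 1) := by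
        conv_lhs => rw [show K.card = (K.card - 1) + 1 by omega]
        rw [Finset.sum_range_succ]
      -- M = K.card - 1 or M = K.card
      have hMle : M ≤ K.card := by omega
      rcases Nat.eq_or_lt_of_le hMax with hMeq|hMlt
      · -- M = K.card - 1, then erase has sum triangle+1, contradiction via ih: M ∈ result
        exfalso
        have herase : ∑ i ∈ K.erase M, i = ∑ i ∈ Finset.range ((K.erase M).card), i + 1 := by
          rw [hcard]; omega
        obtain ⟨hc1, heq⟩ := ih (K.erase M) (Finset.erase_ssubset hM) herase
        have : (K.erase M).card ∈ K.erase M := by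
          have h5 : (K.erase M).card ∈ insert ((K.erase M).card) (Finset.range ((K.erase M).card - 1)) :=
            Finset.mem_insert_self _ _
          rwa [← heq] at h5
        have h2 : (K.erase M).card ∈ K := Finset.mem_of_mem_erase this
        have h3 : (K.erase M).card ≤ M := Finset.le_max' _ _ h2
        rw [hcard] at h3 h2 this hc1
        have : K.card - 1 ≠ M := Finset.ne_of_mem_erase this
        omega
      · have hMeq : M = K.card := by omega
        have herase : ∑ i ∈ K.erase M, i = ∑ i ∈ Finset.range ((K.erase M).card), i := by
          rw [hcard]; omega
        have h6 := sum_eq_triangle (K.erase M) herase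
        calc K = insert M (K.erase M) := hKi
          _ = insert (K.card) (Finset.range (K.card - 1)) := by rw [h6, hcard, hMeq]

end Aux

section Aux2
open Finset PartitionNat

variable {p N : ℕ} {μ lam gam : PartitionNat}

/-- down-closed iteration within a residue class -/
lemma downiter {B : Finset ℕ} (hp : 0 < p)
    (hdc : ∀ b ∈ B, p ≤ b → b - p ∈ B) :
    ∀ m, m ∈ B → ∀ x, x ≤ m → x % p = m % p → x ∈ B := by
  intro m
  induction m using Nat.strong_induction_on with
  | _ m ih =>
    intro hm x hx hmod
    rcases Nat.eq_or_lt_of_le hx with rfl|hlt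
    · exact hm
    · have hdvd : p ∣ m - x := (Nat.modEq_iff_dvd' hx).mp hmod
      have hple : x + p ≤ m := by
        have := Nat.le_of_dvd (show 0 < m - x by omega) hdvd
        omega
      have h1 : m - p ∈ B := hdc m hm (by omega)
      have h2 : (m - p) % p = m % p := by
        conv_rhs => rw [show m = (m - p) + p by omega]
        simp [Nat.add_mod_right]
      exact ih (m - p) (by omega) h1 x (by omega) (hmod.trans h2.symm)

lemma rescover (hp : 0 < p) (a r : ℕ) (hr : r < p) : ∃ j < p, (a + j) % p = r := by
  have ham : a % p < p := Nat.mod_lt _ hp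
  have hda := Nat.div_add_mod a p
  rcases le_or_gt (a % p) r with h|h
  · refine ⟨r - a % p, by omega, ?_⟩
    rw [show a + (r - a % p) = p * (a / p) + r by omega, Nat.mul_add_mod,
      Nat.mod_eq_of_lt hr]
  · refine ⟨p + r - a % p, by omega, ?_⟩
    rw [show a + (p + r - a % p) = p * (a / p) + (p + r) by omega, Nat.mul_add_mod,
      Nat.add_mod_left, Nat.mod_eq_of_lt hr]

end Aux2

section Aux3
open Finset PartitionNat

/-- the `i`-th bead -/
def bead (μ : PartitionNat) (N i : ℕ) : ℕ := μ.part i + (N - 1 - i)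

lemma betaSet_eq_image (N : ℕ) (μ : PartitionNat) :
    betaSet N μ = (Finset.range N).image (bead μ N) := rfl

lemma mem_betaSet {N b : ℕ} {μ : PartitionNat} :
    b ∈ betaSet N μ ↔ ∃ i, i < N ∧ bead μ N i = b := by
  simp [betaSet_eq_image, bead]

lemma bead_lt_bead {N i j : ℕ} (μ : PartitionNat) (hij : i < j) (hj : j < N) :
    bead μ N j < bead μ N i := by
  have := μ.antitone (Nat.le_of_lt hij)
  unfold bead; omega

lemma bead_injOn {N : ℕ} (μ : PartitionNat) :
    Set.InjOn (bead μ N) (Finset.range N) := by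
  intro a ha b hb hab
  simp only [Finset.coe_range, Set.mem_Iio] at ha hb
  rcases Nat.lt_trichotomy a b with h|h|h
  · exact absurd hab (Nat.ne_of_gt (bead_lt_bead μ h hb))
  · exact h
  · exact absurd hab (Nat.ne_of_lt (bead_lt_bead μ h ha))

lemma card_betaSet (N : ℕ) (μ : PartitionNat) : (betaSet N μ).card = N := by
  rw [betaSet_eq_image, Finset.card_image_of_injOn (bead_injOn μ), Finset.card_range]

lemma part_ne_zero_iff {μ : PartitionNat} {i : ℕ} : μ.part i ≠ 0 ↔ i < μ.len := by
  have hfin := μ.finite_support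
  set F := hfin.toFinset with hF
  have hlow : ∀ j ∈ F, ∀ i, i < j → i ∈ F := by
    intro j hj i hij
    simp only [hF, Set.Finite.mem_toFinset, Function.mem_support] at hj ⊢
    have := μ.antitone (Nat.le_of_lt hij)
    omega
  have hrange := lower_eq_range F hlow
  have hlen : μ.len = F.card := by
    rw [len, Set.ncard_eq_toFinset_card _ hfin]
  have : i ∈ F ↔ i < F.card := by rw [hrange]; simp
  rw [hlen, ← this]
  simp [hF, Set.Finite.mem_toFinset, Function.mem_support]

lemma part_eq_zero {μ : PartitionNat} {N i : ℕ} (h : μ.len ≤ N) (hi : N ≤ i) :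
    μ.part i = 0 := by
  by_contra hne
  have := part_ne_zero_iff.mp hne
  omega

lemma filter_gt_card {N i : ℕ} (μ : PartitionNat) (hi : i < N) :
    ((betaSet N μ).filter (fun b => bead μ N i < b)).card = i := by
  have hset : (betaSet N μ).filter (fun b => bead μ N i < b)
      = (Finset.range i).image (bead μ N) := by
    ext x
    simp only [Finset.mem_filter, mem_betaSet, Finset.mem_image, Finset.mem_range]
    constructor
    · rintro ⟨⟨j, hj, rfl⟩, hgt⟩
      refine ⟨j, ?_, rfl⟩
      by_contra hge
      push_neg at hge
      rcases Nat.eq_or_lt_of_le hge with rfl|hlt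
      · omega
      · exact absurd hgt (by have := bead_lt_bead μ hlt hj; omega)
    · rintro ⟨j, hj, rfl⟩
      exact ⟨⟨j, by omega, rfl⟩, bead_lt_bead μ hj hi⟩
  rw [hset, Finset.card_image_of_injOn ((bead_injOn μ).mono (by intro x hx; simp only [Finset.coe_range, Set.mem_Iio] at hx ⊢; omega)), Finset.card_range]

lemma filter_lt_card {N i : ℕ} (μ : PartitionNat) (hi : i < N) :
    ((betaSet N μ).filter (fun b => b < bead μ N i)).card = N - 1 - i := by
  classical
  have hmem : bead μ N i ∈ betaSet N μ := mem_betaSet.mpr ⟨i, hi, rfl⟩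
  have hsplit : (betaSet N μ).filter (fun b => ¬ bead μ N i < b)
      = insert (bead μ N i) ((betaSet N μ).filter (fun b => b < bead μ N i)) := by
    ext x
    simp only [Finset.mem_filter, Finset.mem_insert, not_lt]
    constructor
    · rintro ⟨hx, hle⟩
      rcases Nat.eq_or_lt_of_le hle with h|h
      · exact Or.inl h
      · exact Or.inr ⟨hx, h⟩
    · rintro (rfl|⟨hx, hlt⟩)
      · exact ⟨hmem, le_refl _⟩
      · exact ⟨hx, Nat.le_of_lt hlt⟩
  have h1 := Finset.card_filter_add_card_filter_not
    (s := betaSet N μ) (p := fun b => bead μ N i < b)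
  rw [card_betaSet] at h1
  have h2 : (bead μ N i) ∉ (betaSet N μ).filter (fun b => b < bead μ N i) := by
    simp
  have h3 := Finset.card_insert_of_notMem h2
  rw [← hsplit] at h3
  have h4 := filter_gt_card μ hi
  omega

end Aux3

section Aux4
open Finset PartitionNat

lemma support_subset_range {μ : PartitionNat} {N : ℕ} (h : μ.len ≤ N) :
    Function.support μ.part ⊆ ↑(Finset.range N) := by
  intro i hi
  simp only [Finset.coe_range, Set.mem_Iio]
  have := part_ne_zero_iff.mp hi
  omega

lemma size_eq_sum_range {μ : PartitionNat} {N : ℕ} (h : μ.len ≤ N) :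
    μ.size = ∑ i ∈ Finset.range N, μ.part i :=
  finsum_eq_sum_of_support_subset _ (support_subset_range h)

lemma sum_betaSet {μ : PartitionNat} {N : ℕ} (h : μ.len ≤ N) :
    ∑ b ∈ betaSet N μ, b = μ.size + ∑ i ∈ Finset.range N, (N - 1 - i) := by
  rw [betaSet_eq_image, Finset.sum_image (fun x hx y hy hxy =>
    bead_injOn μ (by simpa using hx) (by simpa using hy) hxy)]
  rw [size_eq_sum_range h, ← Finset.sum_add_distrib]
  rfl

lemma betaSet_succ {μ : PartitionNat} {N : ℕ} (h : μ.len ≤ N) :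
    betaSet (N+1) μ = insert 0 ((betaSet N μ).image (· + 1)) := by
  ext b
  simp only [mem_betaSet, Finset.mem_insert, Finset.mem_image]
  constructor
  · rintro ⟨i, hi, rfl⟩
    rcases Nat.lt_or_ge i N with hiN|hiN
    · refine Or.inr ⟨bead μ N i, ⟨i, hiN, rfl⟩, ?_⟩
      unfold bead; omega
    · left
      have hz : μ.part i = 0 := part_eq_zero h (by omega)
      unfold bead; omega
  · rintro (rfl|⟨x, ⟨i, hi, rfl⟩, rfl⟩)
    · refine ⟨N, by omega, ?_⟩
      have := part_eq_zero h (le_refl N)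
      unfold bead; omega
    · refine ⟨i, by omega, ?_⟩
      unfold bead; omega

lemma zero_mem_betaSet_succ {μ : PartitionNat} {N : ℕ} :
    0 ∈ betaSet (N+1) μ ↔ μ.len ≤ N := by
  constructor
  · intro h0
    obtain ⟨i, hi, hb⟩ := mem_betaSet.mp h0
    unfold bead at hb
    have hpN : μ.part i = 0 := by omega
    by_contra hlen
    push_neg at hlen
    have := part_ne_zero_iff.mpr (show i < μ.len by omega)
    exact this hpN
  · intro h
    rw [betaSet_succ h]
    simp

lemma partitionNat_ext {μ ν : PartitionNat} (h : ∀ i, μ.part i = ν.part i) : μ = ν := by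
  cases μ; cases ν
  simp only [PartitionNat.mk.injEq]
  exact funext h

lemma betaSet_inj {μ ν : PartitionNat} {N : ℕ} (hμ : μ.len ≤ N) (hν : ν.len ≤ N)
    (h : betaSet N μ = betaSet N ν) : μ = ν := by
  apply partitionNat_ext
  intro i
  rcases Nat.lt_or_ge i N with hiN|hiN
  · -- bead μ N i ∈ betaSet N ν with same idx
    have h1 : bead μ N i ∈ betaSet N ν := h ▸ mem_betaSet.mpr ⟨i, hiN, rfl⟩
    obtain ⟨j, hj, hji⟩ := mem_betaSet.mp h1
    have hidxν := filter_gt_card ν hj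
    have hidxμ := filter_gt_card μ hiN
    rw [hji] at hidxν
    rw [← h] at hidxν
    rw [show j = i from by omega] at hji
    unfold bead at hji
    omega
  · rw [part_eq_zero hμ hiN, part_eq_zero hν hiN]

end Aux4

section Aux5
open Finset PartitionNat

variable (N : ℕ) (B : Finset ℕ)

/-- the increasing enumeration of `B` as a function `ℕ → ℕ` (junk value 0 outside) -/
noncomputable def enumOf (h : B.card = N) (i : ℕ) : ℕ :=
  if hi : i < N then (B.orderIsoOfFin h ⟨i, hi⟩ : ℕ) else 0

lemma enumOf_mem (h : B.card = N) {i : ℕ} (hi : i < N) : enumOf N B h i ∈ B := by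
  rw [enumOf, dif_pos hi]
  exact (B.orderIsoOfFin h ⟨i, hi⟩).2

lemma enumOf_strictMono (h : B.card = N) {i j : ℕ} (hij : i < j) (hj : j < N) :
    enumOf N B h i < enumOf N B h j := by
  rw [enumOf, enumOf, dif_pos hj, dif_pos (by omega : i < N)]
  have := (B.orderIsoOfFin h).strictMono (show (⟨i, by omega⟩ : Fin N) < ⟨j, hj⟩ from hij)
  exact this

lemma enumOf_add_le (h : B.card = N) {i j : ℕ} (hij : i ≤ j) (hj : j < N) :
    enumOf N B h i + (j - i) ≤ enumOf N B h j := by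
  obtain ⟨d, rfl⟩ := Nat.exists_eq_add_of_le hij
  clear hij
  induction d with
  | zero => simp
  | succ d ihd =>
    have h1 := ihd (by omega)
    have h2 := enumOf_strictMono N B h (show i + d < i + (d+1) by omega) hj
    omega

lemma enumOf_ge (h : B.card = N) {i : ℕ} (hi : i < N) : i ≤ enumOf N B h i := by
  have := enumOf_add_le N B h (Nat.zero_le i) hi
  omega

lemma enumOf_surj (h : B.card = N) {x : ℕ} (hx : x ∈ B) :
    ∃ i, i < N ∧ enumOf N B h i = x := by
  refine ⟨((B.orderIsoOfFin h).symm ⟨x, hx⟩ : Fin N), Fin.is_lt _, ?_⟩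
  rw [enumOf, dif_pos (Fin.is_lt _)]
  simp

/-- the partition whose `N`-bead beta-set is `B` -/
noncomputable def partitionOf (h : B.card = N) : PartitionNat where
  part i := if i < N then enumOf N B h (N - 1 - i) - (N - 1 - i) else 0
  antitone := by
    intro i j hij
    rcases Nat.lt_or_ge j N with hj|hj
    · have hi : i < N := by omega
      simp only [if_pos hi, if_pos hj]
      rcases Nat.eq_or_lt_of_le hij with rfl|hlt
      · exact le_refl _
      · have := enumOf_add_le N B h (show N - 1 - j ≤ N - 1 - i by omega)
          (show N - 1 - i < N by omega)
        omega
    · rcases Nat.lt_or_ge i N with hi|hi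
      · simp only [if_pos hi, if_neg (by omega : ¬ j < N)]
        exact Nat.zero_le _
      · simp only [if_neg (by omega : ¬ i < N), if_neg (by omega : ¬ j < N)]
        exact le_refl _
  finite_support := by
    apply Set.Finite.subset (Set.finite_Iio N)
    intro i hi
    simp only [Function.mem_support] at hi
    by_contra hIi
    simp only [Set.mem_Iio, not_lt] at hIi
    exact hi (by simp [if_neg (by omega : ¬ i < N)])

lemma len_partitionOf_le (h : B.card = N) : (partitionOf N B h).len ≤ N := by
  rw [len]
  have hsub : Function.support (partitionOf N B h).part ⊆ Set.Iio N := by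
    intro i hi
    simp only [Function.mem_support] at hi
    by_contra hIi
    simp only [Set.mem_Iio, not_lt] at hIi
    exact hi (by simp [partitionOf, if_neg (by omega : ¬ i < N)])
  calc (Function.support (partitionOf N B h).part).ncard
      ≤ (Set.Iio N).ncard := Set.ncard_le_ncard hsub (Set.finite_Iio N)
    _ = N := by
        rw [← Finset.coe_range, Set.ncard_coe_finset, Finset.card_range]

lemma betaSet_partitionOf (h : B.card = N) : betaSet N (partitionOf N B h) = B := by
  ext x
  rw [mem_betaSet]
  constructor
  · rintro ⟨i, hi, rfl⟩
    have hge := enumOf_ge N B h (show N - 1 - i < N by omega)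
    have : bead (partitionOf N B h) N i = enumOf N B h (N - 1 - i) := by
      unfold bead partitionOf
      simp only [if_pos hi]
      omega
    rw [this]
    exact enumOf_mem N B h (by omega)
  · intro hx
    obtain ⟨k, hk, hkx⟩ := enumOf_surj N B h hx
    refine ⟨N - 1 - k, by omega, ?_⟩
    have h2 : N - 1 - (N - 1 - k) = k := by omega
    have hge := enumOf_ge N B h hk
    unfold bead partitionOf
    simp only [if_pos (show N - 1 - k < N by omega), h2]
    omega

end Aux5

section Aux6
open Finset PartitionNat

lemma conj_lt_iff {μ : PartitionNat} {i j : ℕ} : i < μ.conj j ↔ j + 1 ≤ μ.part i := by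
  have hfin : {i : ℕ | j + 1 ≤ μ.part i}.Finite := by
    apply Set.Finite.subset μ.finite_support
    intro x hx
    simp only [Set.mem_setOf_eq] at hx
    simp only [Function.mem_support]
    omega
  set F := hfin.toFinset with hF
  have hlow : ∀ b ∈ F, ∀ a, a < b → a ∈ F := by
    intro b hb a hab
    simp only [hF, Set.Finite.mem_toFinset, Set.mem_setOf_eq] at hb ⊢
    have := μ.antitone (Nat.le_of_lt hab)
    omega
  have hrange := lower_eq_range F hlow
  have hconj : μ.conj j = F.card := by
    rw [conj, Set.ncard_eq_toFinset_card _ hfin]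
  have hmem : i ∈ F ↔ j + 1 ≤ μ.part i := by
    simp [hF, Set.Finite.mem_toFinset]
  rw [hconj, ← hmem, hrange]
  simp

lemma conj_le_len {μ : PartitionNat} {j : ℕ} : μ.conj j ≤ μ.len := by
  rw [conj, len]
  apply Set.ncard_le_ncard _ μ.finite_support
  intro x hx
  simp only [Set.mem_setOf_eq] at hx
  simp only [Function.mem_support]
  omega

lemma conj_anti {μ : PartitionNat} {j j' : ℕ} (h : j ≤ j') : μ.conj j' ≤ μ.conj j := by
  by_contra hc
  push_neg at hc
  have h1 : μ.conj j < μ.conj j' := hc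
  have h2 := conj_lt_iff.mp h1
  have h3 : μ.conj j < μ.conj j := conj_lt_iff.mpr (by omega)
  omega

/-- key: the beta-set of a `p`-core is down-closed within residue classes -/
lemma core_down {p N : ℕ} {γ : PartitionNat} (hcore : IsCore p γ) (hN : γ.len ≤ N) :
    ∀ b ∈ betaSet N γ, p ≤ b → b - p ∈ betaSet N γ := by
  intro b hb hpb
  rcases Nat.eq_zero_or_pos p with rfl|hp
  · simpa using hb
  obtain ⟨i, hiN, hbead⟩ := mem_betaSet.mp hb
  by_contra hnot
  -- part i ≥ 1
  have hparti : 1 ≤ γ.part i := by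
    by_contra hz
    push_neg at hz
    have hz0 : γ.part i = 0 := by omega
    have hblevel : b = N - 1 - i := by rw [← hbead]; unfold bead; omega
    have hipN : i + p < N := by omega
    apply hnot
    refine mem_betaSet.mpr ⟨i + p, hipN, ?_⟩
    have : γ.part (i + p) = 0 := by
      have := γ.antitone (show i ≤ i + p by omega)
      omega
    unfold bead; omega
  -- the complement enumeration
  set cfun := fun j => N + j - γ.conj j with hcfun
  have hconjN : ∀ j, γ.conj j ≤ N := fun j => le_trans conj_le_len hN
  have hcmono : ∀ j j', j < j' → cfun j < cfun j' := by
    intro j j' hjj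
    have h1 := conj_anti (μ := γ) (Nat.le_of_lt hjj)
    have h2 := hconjN j
    simp only [hcfun]
    omega
  have hcnotmem : ∀ j, cfun j ∉ betaSet N γ := by
    intro j hmem
    obtain ⟨i', hi', heq⟩ := mem_betaSet.mp hmem
    unfold bead at heq
    have h2 := hconjN j
    rcases Nat.lt_or_ge i' (γ.conj j) with hlt|hge
    · have := conj_lt_iff.mp hlt
      simp only [hcfun] at heq
      omega
    · have : ¬ (i' < γ.conj j) := by omega
      rw [conj_lt_iff] at this
      simp only [hcfun] at heq
      omega
  have hclt : ∀ j, j < γ.part i → cfun j < bead γ N i := by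
    intro j hj
    have h1 : i < γ.conj j := conj_lt_iff.mpr (by omega)
    have h2 := hconjN j
    unfold bead
    simp only [hcfun]
    omega
  -- counting
  classical
  have hTcard : ((Finset.range (bead γ N i)).filter (fun c => c ∉ betaSet N γ)).card
      = γ.part i := by
    have hsplit := Finset.card_filter_add_card_filter_not
      (s := Finset.range (bead γ N i)) (p := fun c => c ∈ betaSet N γ)
    have hBfilter : (Finset.range (bead γ N i)).filter (fun c => c ∈ betaSet N γ)
        = (betaSet N γ).filter (fun c => c < bead γ N i) := by
      ext x
      simp only [Finset.mem_filter, Finset.mem_range]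
      tauto
    rw [hBfilter, filter_lt_card γ hiN] at hsplit
    rw [Finset.card_range] at hsplit
    have : bead γ N i = γ.part i + (N - 1 - i) := rfl
    have hfix : ∀ (a : ℕ), ((Finset.range (bead γ N i)).filter
        (fun c => ¬ c ∈ betaSet N γ)).card = a → a = γ.part i → True := by
      intro _ _ _; trivial
    omega
  have himage : (Finset.range (γ.part i)).image cfun
      = (Finset.range (bead γ N i)).filter (fun c => c ∉ betaSet N γ) := by
    apply Finset.eq_of_subset_of_card_le
    · intro x hx
      obtain ⟨j, hj, rfl⟩ := Finset.mem_image.mp hx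
      rw [Finset.mem_range] at hj
      simp only [Finset.mem_filter, Finset.mem_range]
      exact ⟨hclt j hj, hcnotmem j⟩
    · rw [hTcard, Finset.card_image_of_injOn]
      · rw [Finset.card_range]
      · intro a ha b' hb' hab
        rcases Nat.lt_trichotomy a b' with h|h|h
        · exact absurd hab (Nat.ne_of_lt (hcmono _ _ h))
        · exact h
        · exact absurd hab (Nat.ne_of_gt (hcmono _ _ h))
  have hbp : b - p ∈ (Finset.range (bead γ N i)).filter (fun c => c ∉ betaSet N γ) := by
    simp only [Finset.mem_filter, Finset.mem_range]
    constructor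
    · rw [hbead]; omega
    · exact hnot
  rw [← himage] at hbp
  obtain ⟨j, hj, hcj⟩ := Finset.mem_image.mp hbp
  rw [Finset.mem_range] at hj
  -- hook i j = p
  have hnode : γ.IsNode i j := hj
  have hhook : γ.hook i j = p := by
    have h1 : i < γ.conj j := conj_lt_iff.mpr (by omega)
    have h2 := hconjN j
    simp only [hcfun] at hcj
    unfold bead at hbead
    rw [hook]
    omega
  exact hcore i j hnode (hhook ▸ dvd_refl p)
end Aux6

section Aux7
open Finset PartitionNat

variable {p : ℕ}

lemma div_injOn_class {r : ℕ} (A : Finset ℕ) (hp : 0 < p) (hA : ∀ x ∈ A, x % p = r) :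
    Set.InjOn (fun x => x / p) A := by
  intro a ha b hb hab
  have h1 := Nat.div_add_mod a p
  have h2 := Nat.div_add_mod b p
  have h3 := hA a ha
  have h4 := hA b hb
  simp only at hab
  rw [← h1, ← h2, hab, h3, h4]

lemma class_image_div {r : ℕ} (A : Finset ℕ) (hp : 0 < p) (hA : ∀ x ∈ A, x % p = r) :
    A = (A.image (fun x => x / p)).image (fun k => r + p * k) := by
  ext x
  simp only [Finset.mem_image]
  constructor
  · intro hx
    refine ⟨x / p, ⟨x, hx, rfl⟩, ?_⟩
    have h1 := Nat.div_add_mod x p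
    have h3 := hA x hx
    omega
  · rintro ⟨k, ⟨y, hy, rfl⟩, rfl⟩
    have h1 := Nat.div_add_mod y p
    have h3 := hA y hy
    have : r + p * (y / p) = y := by omega
    rw [this]
    exact hy

lemma class_card_div {r : ℕ} (A : Finset ℕ) (hp : 0 < p) (hA : ∀ x ∈ A, x % p = r) :
    (A.image (fun x => x / p)).card = A.card :=
  Finset.card_image_of_injOn (div_injOn_class A hp hA)

lemma class_sum_div {r : ℕ} (A : Finset ℕ) (hp : 0 < p) (hA : ∀ x ∈ A, x % p = r) :
    ∑ x ∈ A, x = A.card * r + p * ∑ k ∈ A.image (fun x => x / p), k := by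
  rw [Finset.sum_image (fun x hx y hy hxy => div_injOn_class A hp hA hx hy hxy)]
  have hall : ∀ x ∈ A, x = r + p * (x / p) := by
    intro x hx
    have h1 := Nat.div_add_mod x p
    have h3 := hA x hx
    omega
  calc ∑ x ∈ A, x = ∑ x ∈ A, (r + p * (x / p)) := Finset.sum_congr rfl hall
    _ = A.card * r + p * ∑ x ∈ A, x / p := by
        rw [Finset.sum_add_distrib, Finset.sum_const, smul_eq_mul, Finset.mul_sum]

/-- image description of a residue class of a down-closed set -/
lemma class_of_downclosed {B : Finset ℕ} (hp : 0 < p)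
    (hdc : ∀ b ∈ B, p ≤ b → b - p ∈ B) {r : ℕ} (hr : r < p) :
    B.filter (fun b => b % p = r)
      = (Finset.range ((B.filter (fun b => b % p = r)).card)).image (fun k => r + p * k) := by
  classical
  set G := B.filter (fun b => b % p = r) with hG
  have hGmem : ∀ x ∈ G, x % p = r := by
    intro x hx; exact (Finset.mem_filter.mp hx).2
  set K := G.image (fun x => x / p) with hK
  have hKcard : K.card = G.card := class_card_div G hp hGmem
  have hKlow : ∀ k ∈ K, ∀ k', k' < k → k' ∈ K := by
    intro k hk k' hk'
    obtain ⟨x, hx, hxk⟩ := Finset.mem_image.mp hk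
    have hxr := hGmem x hx
    have hpk : p * (x / p) = p * k := by rw [hxk]
    have hxeq : x = p * k + r := by
      have := Nat.div_add_mod x p; omega
    have hmul : p * k' + p ≤ p * k := by
      have := Nat.mul_le_mul_left p (show k' + 1 ≤ k by omega)
      rwa [Nat.mul_succ] at this
    have hmem : p * k' + r ∈ B := by
      apply downiter hp hdc x (Finset.mem_filter.mp hx).1 (p * k' + r)
      · omega
      · have h1 : (p * k' + r) % p = r := by
          rw [Nat.mul_add_mod, Nat.mod_eq_of_lt hr]
        omega
    have : p * k' + r ∈ G := by
      rw [hG, Finset.mem_filter]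
      exact ⟨hmem, by rw [Nat.mul_add_mod, Nat.mod_eq_of_lt hr]⟩
    have : (p * k' + r) / p ∈ K := Finset.mem_image_of_mem _ this
    have hdiv : (p * k' + r) / p = k' := by
      rw [Nat.mul_add_div hp, Nat.div_eq_of_lt hr]
      omega
    rwa [hdiv] at this
  have := lower_eq_range K hKlow
  rw [hKcard] at this
  conv_lhs => rw [class_image_div G hp hGmem]
  rw [← hK, this]
end Aux7

section Aux8
open Finset PartitionNat

lemma mul_lt_mul_left' {p a b : ℕ} (hp : 0 < p) (h : a < b) : p * a < p * b := by
  have := Nat.mul_le_mul_left p (show a + 1 ≤ b from h)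
  rw [Nat.mul_succ] at this
  omega

lemma classify {p N : ℕ} (hp : 0 < p) {γ lam : PartitionNat}
    (hγN : γ.len ≤ N) (hlamN : lam.len ≤ N)
    (hdc : ∀ b ∈ betaSet N γ, p ≤ b → b - p ∈ betaSet N γ)
    (hsize : lam.size = γ.size + p)
    (hcount : ∀ r : ℕ, ((betaSet N lam).filter (fun b => b % p = r)).card
      = ((betaSet N γ).filter (fun b => b % p = r)).card) :
    ∃ ρ, ρ ∈ betaSet N γ ∧ (∀ b ∈ betaSet N γ, b % p = ρ % p → b ≤ ρ) ∧
      betaSet N lam = insert (ρ + p) ((betaSet N γ).erase ρ) := by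
  classical
  set B := betaSet N γ with hB
  set A := betaSet N lam with hA
  set G : ℕ → Finset ℕ := fun r => B.filter (fun b => b % p = r) with hGdef
  set Ar : ℕ → Finset ℕ := fun r => A.filter (fun b => b % p = r) with hArdef
  set c : ℕ → ℕ := fun r => (G r).card with hcdef
  set KA : ℕ → Finset ℕ := fun r => (Ar r).image (fun x => x / p) with hKAdef
  have hGmem : ∀ r, ∀ x ∈ G r, x % p = r := fun r x hx => (Finset.mem_filter.mp hx).2
  have hAmem : ∀ r, ∀ x ∈ Ar r, x % p = r := fun r x hx => (Finset.mem_filter.mp hx).2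
  have hcount' : ∀ r, (Ar r).card = c r := fun r => hcount r
  have hGdesc : ∀ r, r < p → G r = (Finset.range (c r)).image (fun k => r + p * k) :=
    fun r hr => class_of_downclosed hp hdc hr
  have hKAcard : ∀ r, (KA r).card = c r := by
    intro r
    rw [hKAdef]
    simp only
    rw [class_card_div (Ar r) hp (hAmem r), hcount' r]
  have hfinj : ∀ r : ℕ, ∀ x ∈ (Finset.range (c r)), ∀ y ∈ (Finset.range (c r)),
      r + p * x = r + p * y → x = y := by
    intro r x _ y _ h
    have : p * x = p * y := by omega
    exact Nat.eq_of_mul_eq_mul_left hp this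
  have hsumG : ∀ r, r < p → ∑ x ∈ G r, x = (c r) * r + p * ∑ k ∈ Finset.range (c r), k := by
    intro r hr
    rw [hGdesc r hr, Finset.sum_image (hfinj r), Finset.sum_add_distrib,
      Finset.sum_const, Finset.card_range, smul_eq_mul, Finset.mul_sum]
  have hsumA : ∀ r, ∑ x ∈ Ar r, x = (c r) * r + p * ∑ k ∈ KA r, k := by
    intro r
    rw [class_sum_div (Ar r) hp (hAmem r), hcount' r]
  -- fiberwise totals
  have hAfib : ∑ r ∈ Finset.range p, ∑ x ∈ Ar r, x = ∑ x ∈ A, x :=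
    Finset.sum_fiberwise_of_maps_to (fun x _ => Finset.mem_range.mpr (Nat.mod_lt x hp)) _
  have hGfib : ∑ r ∈ Finset.range p, ∑ x ∈ G r, x = ∑ x ∈ B, x :=
    Finset.sum_fiberwise_of_maps_to (fun x _ => Finset.mem_range.mpr (Nat.mod_lt x hp)) _
  have hsumsAB : ∑ x ∈ A, x = ∑ x ∈ B, x + p := by
    rw [hA, hB, sum_betaSet hlamN, sum_betaSet hγN, hsize]
    ring
  -- per class slack
  have hge : ∀ r, ∑ k ∈ Finset.range (c r), k ≤ ∑ k ∈ KA r, k := by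
    intro r
    have := sum_ge_triangle (KA r)
    rwa [hKAcard r] at this
  set d : ℕ → ℕ := fun r => ∑ k ∈ KA r, k - ∑ k ∈ Finset.range (c r), k with hddef
  have hdsum : ∑ r ∈ Finset.range p, d r = 1 := by
    have h1 : ∑ r ∈ Finset.range p, ∑ x ∈ Ar r, x
        = ∑ r ∈ Finset.range p, (c r * r + p * ∑ k ∈ Finset.range (c r), k)
          + p * ∑ r ∈ Finset.range p, d r := by
      rw [Finset.mul_sum, ← Finset.sum_add_distrib]
      apply Finset.sum_congr rfl
      intro r _
      have := hge r
      rw [hsumA r]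
      have hdr : ∑ k ∈ KA r, k = ∑ k ∈ Finset.range (c r), k + d r := by
        have h5 : d r = ∑ k ∈ KA r, k - ∑ k ∈ Finset.range (c r), k := rfl
        omega
      rw [hdr]; ring
    have h2 : ∑ r ∈ Finset.range p, ∑ x ∈ G r, x
        = ∑ r ∈ Finset.range p, (c r * r + p * ∑ k ∈ Finset.range (c r), k) := by
      apply Finset.sum_congr rfl
      intro r hr
      exact hsumG r (Finset.mem_range.mp hr)
    rw [hAfib] at h1
    rw [hGfib] at h2
    have h3 : p * ∑ r ∈ Finset.range p, d r = p * 1 := by omega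
    exact Nat.eq_of_mul_eq_mul_left hp h3
  -- find the special residue r0
  have hex : ∃ r0, r0 ∈ Finset.range p ∧ d r0 = 1 ∧
      ∀ r ∈ Finset.range p, r ≠ r0 → d r = 0 := by
    have hne : ∃ r0 ∈ Finset.range p, d r0 ≠ 0 := by
      by_contra hall
      push_neg at hall
      rw [Finset.sum_eq_zero hall] at hdsum
      omega
    obtain ⟨r0, hr0mem, hr0⟩ := hne
    have hsplit := Finset.add_sum_erase (Finset.range p) d hr0mem
    rw [hdsum] at hsplit
    have hd1 : d r0 = 1 := by omega
    have hz : ∑ r ∈ (Finset.range p).erase r0, d r = 0 := by omega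
    refine ⟨r0, hr0mem, hd1, ?_⟩
    intro r hr hrne
    have : r ∈ (Finset.range p).erase r0 := Finset.mem_erase.mpr ⟨hrne, hr⟩
    exact Finset.sum_eq_zero_iff.mp hz r this
  obtain ⟨r0, hr0mem, hd1, hdzero⟩ := hex
  have hr0p : r0 < p := Finset.mem_range.mp hr0mem
  -- structure of KA r0
  have hKA0 : 1 ≤ c r0 ∧ KA r0 = insert (c r0) (Finset.range (c r0 - 1)) := by
    have hsum0 : ∑ k ∈ KA r0, k = ∑ k ∈ Finset.range ((KA r0).card), k + 1 := by
      rw [hKAcard r0]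
      have := hge r0
      have hd1' : ∑ k ∈ KA r0, k - ∑ k ∈ Finset.range (c r0), k = 1 := hd1
      omega
    have := sum_eq_triangle_add_one (KA r0) hsum0
    rwa [hKAcard r0] at this
  obtain ⟨hc1, hKA0⟩ := hKA0
  set ρ := r0 + p * (c r0 - 1) with hρdef
  have hmulc : p * (c r0 - 1) + p = p * (c r0) := by
    rw [← Nat.mul_succ]
    congr 1
    omega
  have hρmod : ρ % p = r0 := by
    rw [hρdef, Nat.add_mul_mod_self_left, Nat.mod_eq_of_lt hr0p]
  have hGr0 : G r0 = insert ρ ((Finset.range (c r0 - 1)).image (fun k => r0 + p * k)) := by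
    rw [hGdesc r0 hr0p]
    rw [show c r0 = (c r0 - 1) + 1 by omega, Finset.range_add_one]
    rw [Finset.image_insert]
    simp only [Nat.add_sub_cancel]
    rfl
  have hρnotmem : ρ ∉ (Finset.range (c r0 - 1)).image (fun k => r0 + p * k) := by
    intro hmem
    obtain ⟨k, hk, hkeq⟩ := Finset.mem_image.mp hmem
    rw [Finset.mem_range] at hk
    have := mul_lt_mul_left' hp hk
    omega
  have hρB : ρ ∈ B := by
    have : ρ ∈ G r0 := by rw [hGr0]; exact Finset.mem_insert_self _ _
    exact (Finset.mem_filter.mp this).1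
  have hρmax : ∀ b ∈ B, b % p = ρ % p → b ≤ ρ := by
    intro b hb hbmod
    have hbG : b ∈ G r0 := Finset.mem_filter.mpr ⟨hb, by rw [hbmod, hρmod]⟩
    rw [hGdesc r0 hr0p] at hbG
    obtain ⟨k, hk, hkeq⟩ := Finset.mem_image.mp hbG
    rw [Finset.mem_range] at hk
    have : p * k ≤ p * (c r0 - 1) := Nat.mul_le_mul_left p (by omega)
    omega
  have hρpnotB : ρ + p ∉ B := by
    intro hmem
    have := hρmax _ hmem (by rw [Nat.add_mod_right])
    omega
  -- description of Ar r0
  have hAr0 : Ar r0 = insert (ρ + p) ((G r0).erase ρ) := by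
    have h1 : Ar r0 = (KA r0).image (fun k => r0 + p * k) :=
      class_image_div (Ar r0) hp (hAmem r0)
    rw [h1, hKA0, Finset.image_insert]
    have h2 : (G r0).erase ρ = (Finset.range (c r0 - 1)).image (fun k => r0 + p * k) := by
      rw [hGr0, Finset.erase_insert hρnotmem]
    rw [h2]
    congr 1
    omega
  -- description of Ar r for r ≠ r0
  have hArr : ∀ r, r < p → r ≠ r0 → Ar r = G r := by
    intro r hr hrne
    have hd0 : d r = 0 := hdzero r (Finset.mem_range.mpr hr) hrne
    have hsumr : ∑ k ∈ KA r, k = ∑ k ∈ Finset.range ((KA r).card), k := by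
      rw [hKAcard r]
      have := hge r
      have hd0' : ∑ k ∈ KA r, k - ∑ k ∈ Finset.range (c r), k = 0 := hd0
      omega
    have hKr := sum_eq_triangle (KA r) hsumr
    rw [hKAcard r] at hKr
    have h1 : Ar r = (KA r).image (fun k => r + p * k) :=
      class_image_div (Ar r) hp (hAmem r)
    rw [h1, hKr, ← hGdesc r hr]
  -- assemble
  refine ⟨ρ, hρB, hρmax, ?_⟩
  ext b
  have hbmodlt : b % p < p := Nat.mod_lt b hp
  constructor
  · intro hbA
    have hbAr : b ∈ Ar (b % p) := Finset.mem_filter.mpr ⟨hbA, rfl⟩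
    rcases eq_or_ne (b % p) r0 with heq|hne
    · rw [heq, hAr0] at hbAr
      rcases Finset.mem_insert.mp hbAr with h|h
      · rw [h]; exact Finset.mem_insert_self _ _
      · apply Finset.mem_insert_of_mem
        obtain ⟨hbne, hbG⟩ := Finset.mem_erase.mp h
        exact Finset.mem_erase.mpr ⟨hbne, (Finset.mem_filter.mp hbG).1⟩
    · rw [hArr (b % p) hbmodlt hne] at hbAr
      apply Finset.mem_insert_of_mem
      refine Finset.mem_erase.mpr ⟨?_, (Finset.mem_filter.mp hbAr).1⟩
      intro hbρ
      rw [hbρ] at hne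
      exact hne hρmod
  · intro hbmem
    rcases Finset.mem_insert.mp hbmem with rfl|h
    · have hmod : (ρ + p) % p = r0 := by rw [Nat.add_mod_right, hρmod]
      have : ρ + p ∈ Ar r0 := by
        rw [hAr0]; exact Finset.mem_insert_self _ _
      have := (Finset.mem_filter.mp this).1
      exact this
    · obtain ⟨hbne, hbB⟩ := Finset.mem_erase.mp h
      rcases eq_or_ne (b % p) r0 with heq|hne
      · have hbG : b ∈ G r0 := Finset.mem_filter.mpr ⟨hbB, heq⟩
        have : b ∈ Ar r0 := by
          rw [hAr0]
          exact Finset.mem_insert_of_mem (Finset.mem_erase.mpr ⟨hbne, hbG⟩)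
        exact (Finset.mem_filter.mp this).1
      · have hbG : b ∈ G (b % p) := Finset.mem_filter.mpr ⟨hbB, rfl⟩
        have : b ∈ Ar (b % p) := by rw [hArr (b % p) hbmodlt hne]; exact hbG
        exact (Finset.mem_filter.mp this).1
end Aux8

section Aux9
open Finset PartitionNat

lemma count_factor {p : ℕ} (hp : 0 < p) (B : Finset ℕ) (q : ℕ → Prop) [DecidablePred q] :
    (B.filter (fun b => q (b % p))).card
      = ∑ r ∈ Finset.range p, if q r then (B.filter (fun b => b % p = r)).card else 0 := by
  classical
  rw [Finset.card_eq_sum_card_fiberwise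
    (f := fun b => b % p) (t := Finset.range p)
    (fun x _ => Finset.mem_range.mpr (Nat.mod_lt x hp))]
  apply Finset.sum_congr rfl
  intro r _
  by_cases hqr : q r
  · rw [if_pos hqr]
    congr 1
    ext b
    simp only [Finset.mem_filter]
    constructor
    · rintro ⟨⟨hb, _⟩, h2⟩
      exact ⟨hb, h2⟩
    · rintro ⟨hb, h2⟩
      exact ⟨⟨hb, h2 ▸ hqr⟩, h2⟩
  · rw [if_neg hqr]
    rw [Finset.card_eq_zero]
    ext b
    simp only [Finset.mem_filter, Finset.notMem_empty, iff_false]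
    rintro ⟨⟨hb, hq⟩, h2⟩
    exact hqr (h2 ▸ hq)

lemma count_succ {p N : ℕ} (hp : 0 < p) {μ : PartitionNat} (h : μ.len ≤ N) (r : ℕ) :
    ((betaSet (N+1) μ).filter (fun b => b % p = r)).card
      = (if r = 0 then 1 else 0)
        + ((betaSet N μ).filter (fun b => (b + 1) % p = r)).card := by
  classical
  rw [betaSet_succ h, Finset.filter_insert]
  have himg : ((betaSet N μ).image (· + 1)).filter (fun b => b % p = r)
      = ((betaSet N μ).filter (fun b => (b + 1) % p = r)).image (· + 1) := by
    rw [Finset.filter_image]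
  have hcard : (((betaSet N μ).image (· + 1)).filter (fun b => b % p = r)).card
      = ((betaSet N μ).filter (fun b => (b + 1) % p = r)).card := by
    rw [himg, Finset.card_image_of_injOn]
    intro a _ b _ hab
    simpa using hab
  by_cases hr : (0 : ℕ) % p = r
  · rw [if_pos hr]
    rw [Finset.card_insert_of_notMem]
    · rw [hcard]
      rw [Nat.zero_mod] at hr
      rw [if_pos hr.symm]
      omega
    · intro hmem
      have := (Finset.mem_filter.mp hmem).1
      obtain ⟨x, _, hx⟩ := Finset.mem_image.mp this
      omega
  · rw [if_neg hr]
    rw [hcard]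
    rw [Nat.zero_mod] at hr
    rw [if_neg (fun hh => hr hh.symm)]
    omega

lemma counts_up {p N : ℕ} (hp : 0 < p) {lam γ : PartitionNat}
    (hl : lam.len ≤ N) (hγ : γ.len ≤ N)
    (hc : ∀ r : ℕ, ((betaSet N lam).filter (fun b => b % p = r)).card
      = ((betaSet N γ).filter (fun b => b % p = r)).card) :
    ∀ r : ℕ, ((betaSet (N+1) lam).filter (fun b => b % p = r)).card
      = ((betaSet (N+1) γ).filter (fun b => b % p = r)).card := by
  classical
  intro r
  rw [count_succ hp hl r, count_succ hp hγ r]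
  congr 1
  have hpred : ∀ (B : Finset ℕ), B.filter (fun b => (b + 1) % p = r)
      = B.filter (fun b => (b % p + 1 % p) % p = r) := by
    intro B
    apply Finset.filter_congr
    intro b _
    rw [show (b + 1) % p = (b % p + 1 % p) % p from Nat.add_mod b 1 p]
  rw [hpred, hpred]
  rw [count_factor hp _ (fun t => (t + 1 % p) % p = r),
    count_factor hp _ (fun t => (t + 1 % p) % p = r)]
  apply Finset.sum_congr rfl
  intro x _
  rw [hc x]

lemma counts_up_ge {p N M : ℕ} (hp : 0 < p) {lam γ : PartitionNat}
    (hl : lam.len ≤ N) (hγ : γ.len ≤ N) (hNM : N ≤ M)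
    (hc : ∀ r : ℕ, ((betaSet N lam).filter (fun b => b % p = r)).card
      = ((betaSet N γ).filter (fun b => b % p = r)).card) :
    ∀ r : ℕ, ((betaSet M lam).filter (fun b => b % p = r)).card
      = ((betaSet M γ).filter (fun b => b % p = r)).card := by
  obtain ⟨k, rfl⟩ := Nat.exists_eq_add_of_le hNM
  clear hNM
  induction k with
  | zero => exact hc
  | succ k ih =>
    have := counts_up hp (show lam.len ≤ N + k by omega) (show γ.len ≤ N + k by omega) ih
    intro r
    exact this r

lemma lowbeads {γ : PartitionNat} {N v : ℕ} (h : v + γ.len < N) : v ∈ betaSet N γ := by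
  refine mem_betaSet.mpr ⟨N - 1 - v, by omega, ?_⟩
  have hz : γ.part (N - 1 - v) = 0 := by
    by_contra hne
    have := part_ne_zero_iff.mp hne
    omega
  unfold bead
  omega

lemma move_down {p N : ℕ} (hp : 0 < p) {γ lam : PartitionNat} (hγp : γ.len + p ≤ N) {ρ' : ℕ}
    (hρ'B : ρ' ∈ betaSet (N+1) γ)
    (hρ'max : ∀ b ∈ betaSet (N+1) γ, b % p = ρ' % p → b ≤ ρ')
    (heq : betaSet (N+1) lam = insert (ρ' + p) ((betaSet (N+1) γ).erase ρ')) :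
    lam.len ≤ N ∧ ∃ ρ, ρ ∈ betaSet N γ ∧ (∀ b ∈ betaSet N γ, b % p = ρ % p → b ≤ ρ)
      ∧ ρ' = ρ + 1 ∧ betaSet N lam = insert (ρ + p) ((betaSet N γ).erase ρ) := by
  classical
  have hγN : γ.len ≤ N := by omega
  have hρ'ne : ρ' ≠ 0 := by
    intro h0
    have hpmem : (p : ℕ) ∈ betaSet (N+1) γ := lowbeads (by omega)
    have := hρ'max p hpmem (by rw [h0, Nat.mod_self, Nat.zero_mod])
    omega
  have h0mem : (0 : ℕ) ∈ betaSet (N+1) lam := by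
    rw [heq]
    apply Finset.mem_insert_of_mem
    refine Finset.mem_erase.mpr ⟨fun h => hρ'ne h.symm, ?_⟩
    exact zero_mem_betaSet_succ.mpr hγN
  have hlenlam : lam.len ≤ N := zero_mem_betaSet_succ.mp h0mem
  obtain ⟨ρ, rfl⟩ : ∃ ρ, ρ' = ρ + 1 := ⟨ρ' - 1, by omega⟩
  have hmem_succ : ∀ (μ : PartitionNat), μ.len ≤ N → ∀ x : ℕ,
      (x + 1 ∈ betaSet (N+1) μ ↔ x ∈ betaSet N μ) := by
    intro μ hμ x
    rw [betaSet_succ hμ]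
    simp only [Finset.mem_insert, Finset.mem_image]
    constructor
    · rintro (h|⟨y, hy, hyx⟩)
      · omega
      · have : y = x := by omega
        rwa [← this]
    · intro hx
      exact Or.inr ⟨x, hx, rfl⟩
  have hρB : ρ ∈ betaSet N γ := (hmem_succ γ hγN ρ).mp hρ'B
  refine ⟨hlenlam, ρ, hρB, ?_, rfl, ?_⟩
  · intro b hb hbmod
    have hb1 : b + 1 ∈ betaSet (N+1) γ := (hmem_succ γ hγN b).mpr hb
    have hmod1 : (b + 1) % p = (ρ + 1) % p := by
      rw [Nat.add_mod b 1 p, Nat.add_mod ρ 1 p, hbmod]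
    have := hρ'max (b + 1) hb1 hmod1
    omega
  · ext x
    have h1 : x ∈ betaSet N lam ↔ x + 1 ∈ betaSet (N+1) lam :=
      (hmem_succ lam hlenlam x).symm
    rw [h1, heq]
    simp only [Finset.mem_insert, Finset.mem_erase]
    constructor
    · rintro (h|⟨hne, hmem⟩)
      · left; omega
      · right
        refine ⟨by omega, (hmem_succ γ hγN x).mp hmem⟩
    · rintro (rfl|⟨hne, hmem⟩)
      · left; omega
      · right
        exact ⟨by omega, (hmem_succ γ hγN x).mpr hmem⟩
end Aux9

section Aux10
open Finset PartitionNat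

lemma psum {μ : PartitionNat} {N k M : ℕ} (hk : k ≤ N)
    (hM : ∀ b ∈ betaSet N μ, b < M) :
    ∑ i ∈ Finset.range k, μ.part i + ∑ i ∈ Finset.range k, (N - 1 - i)
      = ∑ x ∈ Finset.range M, min k ((betaSet N μ).filter (fun b => x < b)).card := by
  classical
  have hc : ∀ x, ((betaSet N μ).filter (fun b => x < b)).card
      = ((Finset.range N).filter (fun i => x < bead μ N i)).card := by
    intro x
    rw [betaSet_eq_image, Finset.filter_image, Finset.card_image_of_injOn]
    exact (bead_injOn μ).mono (by intro a ha; simp only [Finset.coe_filter, Finset.mem_range,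
      Set.mem_setOf_eq, Finset.coe_range, Set.mem_Iio] at ha ⊢; exact ha.1)
  have hlowcard : ∀ x, ((Finset.range k).filter (fun i => x < bead μ N i)).card
      = min k (((Finset.range N).filter (fun i => x < bead μ N i)).card) := by
    intro x
    have hlowN : (Finset.range N).filter (fun i => x < bead μ N i)
        = Finset.range (((Finset.range N).filter (fun i => x < bead μ N i)).card) := by
      apply lower_eq_range
      intro j hj i hij
      rw [Finset.mem_filter, Finset.mem_range] at hj ⊢
      refine ⟨by omega, ?_⟩
      have := bead_lt_bead μ hij hj.1
      omega
    have hk2 : (Finset.range k).filter (fun i => x < bead μ N i)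
        = Finset.range k ∩ ((Finset.range N).filter (fun i => x < bead μ N i)) := by
      ext i
      simp only [Finset.mem_filter, Finset.mem_inter, Finset.mem_range]
      constructor
      · rintro ⟨h1, h2⟩; exact ⟨h1, by omega, h2⟩
      · rintro ⟨h1, _, h2⟩; exact ⟨h1, h2⟩
    rw [hk2]
    conv_lhs => rw [hlowN]
    have hir : ∀ a b : ℕ, Finset.range a ∩ Finset.range b = Finset.range (min a b) := by
      intro a b
      ext t
      simp only [Finset.mem_inter, Finset.mem_range, Nat.lt_min]
    rw [hir, Finset.card_range]
  have hswap : ∑ x ∈ Finset.range M, ((Finset.range k).filter (fun i => x < bead μ N i)).card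
      = ∑ i ∈ Finset.range k, bead μ N i := by
    have h1 : ∀ x, ((Finset.range k).filter (fun i => x < bead μ N i)).card
        = ∑ i ∈ Finset.range k, if x < bead μ N i then 1 else 0 := by
      intro x; rw [Finset.card_filter]
    have h2 : ∀ i ∈ Finset.range k, (∑ x ∈ Finset.range M, if x < bead μ N i then 1 else 0)
        = bead μ N i := by
      intro i hi
      rw [Finset.mem_range] at hi
      have hbM : bead μ N i < M := hM _ (mem_betaSet.mpr ⟨i, by omega, rfl⟩)
      rw [← Finset.card_filter]
      have : (Finset.range M).filter (fun x => x < bead μ N i) = Finset.range (bead μ N i) := by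
        ext y
        simp only [Finset.mem_filter, Finset.mem_range]
        omega
      rw [this, Finset.card_range]
    calc ∑ x ∈ Finset.range M, ((Finset.range k).filter (fun i => x < bead μ N i)).card
        = ∑ x ∈ Finset.range M, ∑ i ∈ Finset.range k, (if x < bead μ N i then 1 else 0) := by
          apply Finset.sum_congr rfl; intro x _; exact h1 x
      _ = ∑ i ∈ Finset.range k, ∑ x ∈ Finset.range M, (if x < bead μ N i then 1 else 0) :=
          Finset.sum_comm
      _ = ∑ i ∈ Finset.range k, bead μ N i := Finset.sum_congr rfl h2
  calc ∑ i ∈ Finset.range k, μ.part i + ∑ i ∈ Finset.range k, (N - 1 - i)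
      = ∑ i ∈ Finset.range k, bead μ N i := by
        rw [← Finset.sum_add_distrib]; rfl
    _ = ∑ x ∈ Finset.range M, ((Finset.range k).filter (fun i => x < bead μ N i)).card :=
        hswap.symm
    _ = ∑ x ∈ Finset.range M, min k ((betaSet N μ).filter (fun b => x < b)).card := by
        apply Finset.sum_congr rfl
        intro x _
        rw [hlowcard x, hc x]

lemma cmove {B : Finset ℕ} {ρ p x : ℕ} (hp : 0 < p) (hρ : ρ ∈ B) (hρp : ρ + p ∉ B) :
    ((insert (ρ + p) (B.erase ρ)).filter (fun b => x < b)).card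
      = (B.filter (fun b => x < b)).card + (if ρ ≤ x ∧ x < ρ + p then 1 else 0) := by
  classical
  rw [Finset.filter_insert, Finset.filter_erase]
  by_cases h1 : x < ρ + p
  · rw [if_pos h1]
    have hnm : ρ + p ∉ (B.filter (fun b => x < b)).erase ρ := by
      intro hmem
      exact hρp (Finset.mem_filter.mp (Finset.mem_erase.mp hmem).2).1
    rw [Finset.card_insert_of_notMem hnm]
    by_cases h2 : x < ρ
    · have hρf : ρ ∈ B.filter (fun b => x < b) := Finset.mem_filter.mpr ⟨hρ, h2⟩
      rw [Finset.card_erase_of_mem hρf]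
      have : 1 ≤ (B.filter (fun b => x < b)).card := Finset.card_pos.mpr ⟨ρ, hρf⟩
      rw [if_neg (by omega)]
      omega
    · have hρf : ρ ∉ B.filter (fun b => x < b) := by
        intro hmem
        exact h2 (Finset.mem_filter.mp hmem).2
      rw [Finset.erase_eq_of_notMem hρf]
      rw [if_pos ⟨by omega, h1⟩]
  · rw [if_neg h1]
    have hρf : ρ ∉ B.filter (fun b => x < b) := by
      intro hmem
      have := (Finset.mem_filter.mp hmem).2
      omega
    rw [Finset.erase_eq_of_notMem hρf, if_neg (by omega)]
    omega

lemma move_sum_le {B : Finset ℕ} {p ρ ρ' k M : ℕ} (hp : 0 < p)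
    (hρ : ρ ∈ B) (hρ' : ρ' ∈ B) (hle : ρ ≤ ρ') (hρp : ρ + p ∉ B) (hρ'p : ρ' + p ∉ B)
    (hM : ∀ b ∈ B, b + p < M) :
    ∑ x ∈ Finset.range M, min k ((insert (ρ + p) (B.erase ρ)).filter (fun b => x < b)).card
      ≤ ∑ x ∈ Finset.range M, min k ((insert (ρ' + p) (B.erase ρ')).filter (fun b => x < b)).card := by
  classical
  set c : ℕ → ℕ := fun x => (B.filter (fun b => x < b)).card with hcdef
  have hsplit : ∀ (σ : ℕ), σ ∈ B → σ + p ∉ B →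
      ∑ x ∈ Finset.range M, min k ((insert (σ + p) (B.erase σ)).filter (fun b => x < b)).card
      = ∑ x ∈ Finset.range M, min k (c x)
        + ((Finset.range M).filter (fun x => σ ≤ x ∧ x < σ + p ∧ c x < k)).card := by
    intro σ hσ hσp
    have h1 : ∀ x, min k ((insert (σ + p) (B.erase σ)).filter (fun b => x < b)).card
        = min k (c x) + (if σ ≤ x ∧ x < σ + p ∧ c x < k then 1 else 0) := by
      intro x
      have hcc : (B.filter (fun b => x < b)).card = c x := rfl
      rw [cmove hp hσ hσp, hcc]
      rw [Nat.min_def, Nat.min_def]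
      split_ifs <;> omega
    rw [Finset.sum_congr rfl (fun x _ => h1 x), Finset.sum_add_distrib]
    congr 1
    rw [← Finset.card_filter]
  rw [hsplit ρ hρ hρp, hsplit ρ' hρ' hρ'p]
  have hcard : ((Finset.range M).filter (fun x => ρ ≤ x ∧ x < ρ + p ∧ c x < k)).card
      ≤ ((Finset.range M).filter (fun x => ρ' ≤ x ∧ x < ρ' + p ∧ c x < k)).card := by
    apply Finset.card_le_card_of_injOn (fun x => x + (ρ' - ρ))
    · intro x hx
      rw [Finset.mem_coe, Finset.mem_filter, Finset.mem_range] at hx ⊢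
      obtain ⟨hxM, hx1, hx2, hx3⟩ := hx
      dsimp only
      refine ⟨?_, by omega, by omega, ?_⟩
      · have := hM ρ' hρ'
        omega
      · have hmono : B.filter (fun b => x + (ρ' - ρ) < b) ⊆ B.filter (fun b => x < b) := by
          intro b hb
          rw [Finset.mem_filter] at hb ⊢
          exact ⟨hb.1, by omega⟩
        have := Finset.card_le_card hmono
        have hcx : c x < k := hx3
        calc (B.filter (fun b => x + (ρ' - ρ) < b)).card ≤ c x := this
          _ < k := hcx
    · intro a _ b _ hab
      have : a + (ρ' - ρ) = b + (ρ' - ρ) := hab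
      omega
  omega
end Aux10

section Aux11
open Finset PartitionNat

lemma bead_bound {γ : PartitionNat} {N b : ℕ} (hb : b ∈ betaSet N γ) :
    b < γ.part 0 + N := by
  obtain ⟨i, hi, rfl⟩ := mem_betaSet.mp hb
  have := γ.antitone (Nat.zero_le i)
  unfold bead
  omega

lemma dom_move {p N : ℕ} (hp : 0 < p) {γ lam mu : PartitionNat}
    (hlam : lam.len ≤ N) (hmu : mu.len ≤ N)
    {ρ ρ' : ℕ} (hρB : ρ ∈ betaSet N γ) (hρ'B : ρ' ∈ betaSet N γ) (hle : ρ ≤ ρ')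
    (hρp : ρ + p ∉ betaSet N γ) (hρ'p : ρ' + p ∉ betaSet N γ)
    (hbl : betaSet N lam = insert (ρ + p) ((betaSet N γ).erase ρ))
    (hbm : betaSet N mu = insert (ρ' + p) ((betaSet N γ).erase ρ'))
    (hsl : lam.size = mu.size) :
    Dom lam mu := by
  intro k
  rcases le_or_gt k N with hk|hk
  · set M := γ.part 0 + N + p with hMdef
    have hMB : ∀ b ∈ betaSet N γ, b + p < M := by
      intro b hb
      have := bead_bound hb
      omega
    have hbnd : ∀ (ν : PartitionNat) (σ : ℕ), σ ∈ betaSet N γ →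
        betaSet N ν = insert (σ + p) ((betaSet N γ).erase σ) →
        ∀ b ∈ betaSet N ν, b < M := by
      intro ν σ hσ hbν b hb
      rw [hbν] at hb
      rcases Finset.mem_insert.mp hb with rfl|h
      · have := bead_bound hσ
        omega
      · have := bead_bound (Finset.mem_of_mem_erase h)
        omega
    have hpl := psum (μ := lam) (M := M) hk (hbnd lam ρ hρB hbl)
    have hpm := psum (μ := mu) (M := M) hk (hbnd mu ρ' hρ'B hbm)
    rw [hbl] at hpl
    rw [hbm] at hpm
    have hms := move_sum_le (B := betaSet N γ) (k := k) (M := M) hp hρB hρ'B hle hρp hρ'p hMB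
    omega
  · have h1 : ∑ i ∈ Finset.range k, lam.part i = lam.size :=
      (size_eq_sum_range (by omega)).symm
    have h2 : ∑ i ∈ Finset.range k, mu.part i = mu.size :=
      (size_eq_sum_range (by omega)).symm
    omega

lemma singular_of_run {p N : ℕ} (hp : 1 ≤ p) {lam : PartitionNat} (hlam : lam.len ≤ N)
    {a x : ℕ} (hrun : ∀ j, j < p → a + j ∈ betaSet N lam) (hx : x < a)
    (hxB : x ∉ betaSet N lam) : ¬ Regular p lam := by
  classical
  obtain ⟨i1, hi1N, hb1⟩ := mem_betaSet.mp (hrun (p - 1) (by omega))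
  obtain ⟨i2, hi2N, hb2⟩ := mem_betaSet.mp (by simpa using hrun 0 (by omega))
  have hcard1 := filter_gt_card lam hi1N
  have hcard2 := filter_gt_card lam hi2N
  rw [hb1] at hcard1
  rw [hb2] at hcard2
  -- split the filter above a
  have hsplitu : (betaSet N lam).filter (fun b => a < b)
      = ((betaSet N lam).filter (fun b => a + (p - 1) < b)) ∪ Finset.Ioc a (a + (p - 1)) := by
    ext b
    simp only [Finset.mem_filter, Finset.mem_union, Finset.mem_Ioc]
    constructor
    · rintro ⟨hb, hab⟩
      rcases Nat.lt_or_ge (a + (p - 1)) b with h|h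
      · exact Or.inl ⟨hb, h⟩
      · exact Or.inr ⟨hab, h⟩
    · rintro (⟨hb, h⟩|⟨h1, h2⟩)
      · exact ⟨hb, by omega⟩
      · have : b = a + (b - a) := by omega
        rw [this]
        exact ⟨hrun (b - a) (by omega), by omega⟩
  have hdisj : Disjoint ((betaSet N lam).filter (fun b => a + (p - 1) < b))
      (Finset.Ioc a (a + (p - 1))) := by
    rw [Finset.disjoint_left]
    intro b hb hb2
    rw [Finset.mem_filter] at hb
    rw [Finset.mem_Ioc] at hb2
    omega
  have hIoc : (Finset.Ioc a (a + (p - 1))).card = p - 1 := by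
    rw [Nat.card_Ioc]
    omega
  have hi21 : i2 = i1 + (p - 1) := by
    rw [← hcard2, hsplitu, Finset.card_union_of_disjoint hdisj, hcard1, hIoc]
  -- below a
  have hcard3 := filter_lt_card lam hi2N
  have hbelow : ((betaSet N lam).filter (fun b => b < bead lam N i2)).card ≤ a - 1 := by
    have hsub : (betaSet N lam).filter (fun b => b < bead lam N i2)
        ⊆ (Finset.range a).erase x := by
      intro b hb
      rw [Finset.mem_filter] at hb
      rw [Finset.mem_erase, Finset.mem_range]
      rw [hb2] at hb
      refine ⟨?_, by omega⟩
      intro hbx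
      exact hxB (hbx ▸ hb.1)
    calc ((betaSet N lam).filter (fun b => b < bead lam N i2)).card
        ≤ ((Finset.range a).erase x).card := Finset.card_le_card hsub
      _ = a - 1 := by rw [Finset.card_erase_of_mem (Finset.mem_range.mpr hx), Finset.card_range]
  rw [hcard3] at hbelow
  unfold bead at hb1 hb2
  intro hreg
  have hv : 1 ≤ lam.part i2 := by omega
  have hanti := lam.antitone (show i1 ≤ i2 by omega)
  have := hreg i1 (by omega)
  rw [show i1 + p - 1 = i2 by omega] at this
  omega

lemma run_of_singular {p N : ℕ} (hp : 1 ≤ p) {lam : PartitionNat} (hlam : lam.len ≤ N)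
    (hns : ¬ Regular p lam) :
    ∃ a x, (∀ j, j < p → a + j ∈ betaSet N lam) ∧ x < a ∧ x ∉ betaSet N lam := by
  classical
  rw [Regular] at hns
  push_neg at hns
  obtain ⟨i, hne, hge⟩ := hns
  have heq : lam.part (i + p - 1) = lam.part i := by
    have := lam.antitone (show i ≤ i + p - 1 by omega)
    omega
  have hiN : i + p - 1 < N := by
    have h1 : lam.part (i + p - 1) ≠ 0 := by omega
    have := part_ne_zero_iff.mp h1
    omega
  set a := bead lam N (i + p - 1) with hadef
  refine ⟨a, ?_⟩
  have hrun : ∀ j, j < p → a + j ∈ betaSet N lam := by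
    intro j hj
    refine mem_betaSet.mpr ⟨i + p - 1 - j, by omega, ?_⟩
    have hpartj : lam.part (i + p - 1 - j) = lam.part i := by
      have h1 := lam.antitone (show i ≤ i + p - 1 - j by omega)
      have h2 := lam.antitone (show i + p - 1 - j ≤ i + p - 1 by omega)
      omega
    rw [hadef]
    unfold bead
    rw [hpartj, heq]
    omega
  have hgap : ∃ x, x < a ∧ x ∉ betaSet N lam := by
    by_contra hall
    push_neg at hall
    have hsub : Finset.range a ⊆ (betaSet N lam).filter (fun b => b < bead lam N (i + p - 1)) := by
      intro y hy
      rw [Finset.mem_range] at hy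
      rw [Finset.mem_filter]
      exact ⟨hall y hy, hy⟩
    have hc := Finset.card_le_card hsub
    rw [Finset.card_range, filter_lt_card lam hiN] at hc
    have : a = lam.part (i + p - 1) + (N - 1 - (i + p - 1)) := rfl
    omega
  obtain ⟨x, hx1, hx2⟩ := hgap
  exact ⟨x, hrun, hx1, hx2⟩
end Aux11

section Aux12
open Finset PartitionNat

/-- the partition obtained by moving bead `b` up by `p` in the `N`-bead beta-set of `γ` -/
noncomputable def movedPart (p N : ℕ) (γ : PartitionNat) (b : ℕ) : PartitionNat :=
  if h : (insert (b + p) ((betaSet N γ).erase b)).card = N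
  then partitionOf N (insert (b + p) ((betaSet N γ).erase b)) h else γ

lemma moved_card {p N : ℕ} {γ : PartitionNat} {b : ℕ} (hb : b ∈ betaSet N γ)
    (hbp : b + p ∉ betaSet N γ) :
    (insert (b + p) ((betaSet N γ).erase b)).card = N := by
  have h1 : b + p ∉ (betaSet N γ).erase b := fun h => hbp (Finset.mem_of_mem_erase h)
  rw [Finset.card_insert_of_notMem h1, Finset.card_erase_of_mem hb, card_betaSet]
  have hpos : 0 < N := by
    have := card_betaSet N γ
    have := Finset.card_pos.mpr ⟨b, hb⟩
    omega
  omega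

lemma movedPart_beta {p N : ℕ} {γ : PartitionNat} {b : ℕ} (hb : b ∈ betaSet N γ)
    (hbp : b + p ∉ betaSet N γ) :
    betaSet N (movedPart p N γ b) = insert (b + p) ((betaSet N γ).erase b)
      ∧ (movedPart p N γ b).len ≤ N := by
  rw [movedPart, dif_pos (moved_card hb hbp)]
  exact ⟨betaSet_partitionOf _ _ _, len_partitionOf_le _ _ _⟩

lemma moved_counts {p : ℕ} (hp : 0 < p) {B : Finset ℕ} {b : ℕ} (hb : b ∈ B) (hbp : b + p ∉ B) :
    ∀ r : ℕ, ((insert (b + p) (B.erase b)).filter (fun x => x % p = r)).card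
      = (B.filter (fun x => x % p = r)).card := by
  classical
  intro r
  have hmod : (b + p) % p = b % p := Nat.add_mod_right b p
  by_cases hr : b % p = r
  · have h1 : (insert (b + p) (B.erase b)).filter (fun x => x % p = r)
        = insert (b + p) ((B.filter (fun x => x % p = r)).erase b) := by
      ext x
      simp only [Finset.mem_filter, Finset.mem_insert, Finset.mem_erase]
      constructor
      · rintro ⟨(rfl|⟨hne, hxB⟩), hxr⟩
        · exact Or.inl rfl
        · exact Or.inr ⟨hne, hxB, hxr⟩
      · rintro (rfl|⟨hne, hxB, hxr⟩)
        · exact ⟨Or.inl rfl, by rw [hmod, hr]⟩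
        · exact ⟨Or.inr ⟨hne, hxB⟩, hxr⟩
    rw [h1, Finset.card_insert_of_notMem, Finset.card_erase_of_mem]
    · have : b ∈ B.filter (fun x => x % p = r) := Finset.mem_filter.mpr ⟨hb, hr⟩
      have := Finset.card_pos.mpr ⟨b, this⟩
      omega
    · exact Finset.mem_filter.mpr ⟨hb, hr⟩
    · intro h
      exact hbp (Finset.mem_filter.mp (Finset.mem_erase.mp h).2).1
  · have h1 : (insert (b + p) (B.erase b)).filter (fun x => x % p = r)
        = B.filter (fun x => x % p = r) := by
      ext x
      simp only [Finset.mem_filter, Finset.mem_insert, Finset.mem_erase]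
      constructor
      · rintro ⟨(rfl|⟨hne, hxB⟩), hxr⟩
        · rw [hmod] at hxr
          exact absurd hxr hr
        · exact ⟨hxB, hxr⟩
      · rintro ⟨hxB, hxr⟩
        refine ⟨Or.inr ⟨?_, hxB⟩, hxr⟩
        rintro rfl
        exact hr hxr
    rw [h1]

lemma moved_sum {B : Finset ℕ} {b p : ℕ} (hb : b ∈ B) (hbp : b + p ∉ B) :
    ∑ x ∈ insert (b + p) (B.erase b), x + b = ∑ x ∈ B, x + (b + p) := by
  have h1 : b + p ∉ B.erase b := fun h => hbp (Finset.mem_of_mem_erase h)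
  rw [Finset.sum_insert h1]
  have h2 : ∑ x ∈ B.erase b, x + b = ∑ x ∈ B, x := Finset.sum_erase_add B _ hb
  omega

lemma inBlock_movedPart {p N : ℕ} (hp : 0 < p) {γ : PartitionNat}
    (hγcore : IsCore p γ) (hγN : γ.len ≤ N) {b : ℕ} (hb : b ∈ betaSet N γ)
    (hbp : b + p ∉ betaSet N γ) : InBlock p 1 γ (movedPart p N γ b) := by
  obtain ⟨hbeta, hlen⟩ := movedPart_beta (p := p) hb hbp
  constructor
  · -- size
    have h1 := sum_betaSet hlen
    have h2 := sum_betaSet hγN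
    have h3 := moved_sum hb hbp
    rw [hbeta] at h1
    omega
  · refine ⟨hγcore, N, hlen, hγN, ?_⟩
    intro r
    rw [hbeta]
    exact moved_counts hp hb hbp r
end Aux12

section Aux13
open Finset PartitionNat

lemma move_down_iter {p : ℕ} (hp : 0 < p) {γ lam : PartitionNat} {N : ℕ}
    (hγp : γ.len + p ≤ N) :
    ∀ t, lam.len ≤ N + t →
      ∀ ρ', ρ' ∈ betaSet (N + t) γ →
      (∀ b ∈ betaSet (N + t) γ, b % p = ρ' % p → b ≤ ρ') →
      betaSet (N + t) lam = insert (ρ' + p) ((betaSet (N + t) γ).erase ρ') →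
      lam.len ≤ N ∧ ∃ ρ, ρ ∈ betaSet N γ ∧ (∀ b ∈ betaSet N γ, b % p = ρ % p → b ≤ ρ) ∧
        betaSet N lam = insert (ρ + p) ((betaSet N γ).erase ρ) := by
  intro t
  induction t with
  | zero => exact fun hlen ρ' h1 h2 h3 => ⟨hlen, ρ', h1, h2, h3⟩
  | succ t ih =>
    intro hlen ρ' h1 h2 h3
    have hγp' : γ.len + p ≤ N + t := by omega
    obtain ⟨hlen', ρ, hρB, hρmax, _, hbeta⟩ := move_down hp hγp' h1 h2 h3
    exact ih hlen' ρ hρB hρmax hbeta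

lemma block_member_moved {p : ℕ} (hp : 0 < p) {γ lam : PartitionNat} (hγcore : IsCore p γ)
    (hbl : InBlock p 1 γ lam) :
    lam.len ≤ γ.len + p ∧ ∃ ρ, ρ ∈ betaSet (γ.len + p) γ ∧
      (∀ b ∈ betaSet (γ.len + p) γ, b % p = ρ % p → b ≤ ρ) ∧
      betaSet (γ.len + p) lam
        = insert (ρ + p) ((betaSet (γ.len + p) γ).erase ρ) := by
  obtain ⟨hsize, _, N₀, hlN₀, hγN₀, hcounts⟩ := hbl
  set N := γ.len + p with hNdef
  set N₁ := max N₀ N with hN₁def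
  have hcounts₁ := counts_up_ge (M := N₁) hp hlN₀ hγN₀ (le_max_left N₀ N) hcounts
  have hγN₁ : γ.len ≤ N₁ := by
    have : N ≤ N₁ := le_max_right _ _
    omega
  have hlN₁ : lam.len ≤ N₁ := le_trans hlN₀ (le_max_left _ _)
  have hdc := core_down hγcore hγN₁
  have hsize' : lam.size = γ.size + p := by rw [hsize]; ring
  obtain ⟨ρ', h1, h2, h3⟩ := classify hp hγN₁ hlN₁ hdc hsize' hcounts₁
  have hNN₁ : N ≤ N₁ := le_max_right _ _
  have hN₁eq : N₁ = N + (N₁ - N) := by omega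
  rw [hN₁eq] at h1 h2 h3 hlN₁
  exact move_down_iter hp (le_refl N) (N₁ - N) hlN₁ ρ' h1 h2 h3
end Aux13

/-- the block of weight 1 over a `p`-core `γ` has exactly `p`
elements, is totally ordered by the dominance order, and contains exactly one
`p`-singular partition, namely its dominance-minimum. -/
theorem stmt15 (p : ℕ) (hp : p.Prime) (hodd : Odd p)
    (γ : PartitionNat) (hγ : IsCore p γ) :
    {lam : PartitionNat | InBlock p 1 γ lam}.ncard = p ∧
    (∀ lam mu : PartitionNat, InBlock p 1 γ lam → InBlock p 1 γ mu →
        Dom lam mu ∨ Dom mu lam) ∧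
    (∃! lam : PartitionNat, InBlock p 1 γ lam ∧ ¬ Regular p lam) ∧
    (∀ lam : PartitionNat, InBlock p 1 γ lam → ¬ Regular p lam →
        ∀ mu : PartitionNat, InBlock p 1 γ mu → Dom lam mu) := by
  classical
  have hp0 : 0 < p := hp.pos
  have hp1 : 1 ≤ p := hp0
  set N := γ.len + p with hNdef
  have hγN : γ.len ≤ N := by omega
  set B := betaSet N γ with hBdef
  set CM := B.filter (fun b => ∀ b' ∈ B, b' % p = b % p → b' ≤ b) with hCMdef
  have hlow : ∀ v, v < p → v ∈ B := fun v hv => lowbeads (by omega)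
  have hdcN := core_down hγ hγN
  have hCMmax : ∀ b ∈ CM, ∀ b' ∈ B, b' % p = b % p → b' ≤ b :=
    fun b hb => (Finset.mem_filter.mp hb).2
  have hCMB : ∀ b ∈ CM, b ∈ B := fun b hb => (Finset.mem_filter.mp hb).1
  have hsurj : ∀ r, r < p → ∃ b ∈ CM, b % p = r := by
    intro r hr
    have hne : (B.filter (fun x => x % p = r)).Nonempty :=
      ⟨r, Finset.mem_filter.mpr ⟨hlow r hr, Nat.mod_eq_of_lt hr⟩⟩
    set m := (B.filter (fun x => x % p = r)).max' hne with hmdef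
    have hm := (B.filter (fun x => x % p = r)).max'_mem hne
    rw [Finset.mem_filter] at hm
    obtain ⟨hmB, hmr⟩ := hm
    refine ⟨m, Finset.mem_filter.mpr ⟨hmB, ?_⟩, hmr⟩
    intro b' hb' hmod
    exact Finset.le_max' _ b' (Finset.mem_filter.mpr ⟨hb', by rw [hmod, hmr]⟩)
  have hinj : ∀ b ∈ CM, ∀ b' ∈ CM, b % p = b' % p → b = b' := by
    intro b hb b' hb' hmod
    have h1 : b' ≤ b := hCMmax b hb b' (hCMB b' hb') hmod.symm
    have h2 : b ≤ b' := hCMmax b' hb' b (hCMB b hb) hmod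
    omega
  have hCMcard : CM.card = p := by
    rw [← Finset.card_range p]
    apply Finset.card_bij (fun b _ => b % p)
    · intro b _
      exact Finset.mem_range.mpr (Nat.mod_lt _ hp0)
    · intro b hb b' hb' h
      exact hinj b hb b' hb' h
    · intro r hr
      obtain ⟨b, hb, hbr⟩ := hsurj r (Finset.mem_range.mp hr)
      exact ⟨b, hb, hbr⟩
  have hCMnp : ∀ b ∈ CM, b + p ∉ B := by
    intro b hb hmem
    have := hCMmax b hb (b + p) hmem (Nat.add_mod_right b p)
    omega
  set f : ℕ → PartitionNat := fun b => movedPart p N γ b with hfdef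
  have hfbeta : ∀ b ∈ CM, betaSet N (f b) = insert (b + p) (B.erase b) ∧ (f b).len ≤ N :=
    fun b hb => movedPart_beta (hCMB b hb) (hCMnp b hb)
  have hfblock : ∀ b ∈ CM, InBlock p 1 γ (f b) :=
    fun b hb => inBlock_movedPart hp0 hγ hγN (hCMB b hb) (hCMnp b hb)
  have hSmem : ∀ lam : PartitionNat, InBlock p 1 γ lam ↔ ∃ b ∈ CM, f b = lam := by
    intro lam
    constructor
    · intro hbl
      obtain ⟨hlen, ρ, hρB, hρmax, hbeta⟩ := block_member_moved hp0 hγ hbl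
      have hρCM : ρ ∈ CM := Finset.mem_filter.mpr ⟨hρB, hρmax⟩
      refine ⟨ρ, hρCM, ?_⟩
      obtain ⟨hfb, hfl⟩ := hfbeta ρ hρCM
      exact betaSet_inj hfl hlen (by rw [hfb, hbeta])
    · rintro ⟨b, hb, rfl⟩
      exact hfblock b hb
  have hfinj : ∀ a ∈ CM, ∀ b ∈ CM, f a = f b → a = b := by
    intro a ha b hb hab
    obtain ⟨hfa, _⟩ := hfbeta a ha
    obtain ⟨hfb, _⟩ := hfbeta b hb
    have heq : insert (a + p) (B.erase a) = insert (b + p) (B.erase b) := by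
      rw [← hfa, ← hfb, hab]
    have hmem : a + p ∈ insert (b + p) (B.erase b) := by
      rw [← heq]
      exact Finset.mem_insert_self _ _
    rcases Finset.mem_insert.mp hmem with h|h
    · omega
    · exact absurd (Finset.mem_of_mem_erase h) (hCMnp a ha)
  have hCMne : CM.Nonempty := Finset.card_pos.mp (by rw [hCMcard]; omega)
  set b0 := CM.min' hCMne with hb0def
  have hb0CM : b0 ∈ CM := CM.min'_mem hCMne
  have hdom : ∀ a ∈ CM, ∀ b ∈ CM, a ≤ b → Dom (f a) (f b) := by
    intro a ha b hb hab
    obtain ⟨hfa, hla⟩ := hfbeta a ha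
    obtain ⟨hfb, hlb⟩ := hfbeta b hb
    apply dom_move hp0 hla hlb (hCMB a ha) (hCMB b hb) hab (hCMnp a ha) (hCMnp b hb) hfa hfb
    have h1 := (hfblock a ha).1
    have h2 := (hfblock b hb).1
    omega
  have hsing : ¬ Regular p (f b0) := by
    obtain ⟨hfb, hlf⟩ := hfbeta b0 hb0CM
    apply singular_of_run hp1 hlf (a := b0 + 1) (x := b0)
    · intro j hj
      rw [hfb]
      by_cases hjp : j = p - 1
      · rw [show b0 + 1 + j = b0 + p by omega]
        exact Finset.mem_insert_self _ _
      · have hjlt : j + 1 < p := by omega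
        set v := b0 + 1 + j with hvdef
        obtain ⟨m, hmCM, hmr⟩ := hsurj (v % p) (Nat.mod_lt _ hp0)
        have hmge : b0 ≤ m := CM.min'_le m hmCM
        have hmne : m ≠ b0 := by
          intro hmeq
          have hmr' : b0 % p = v % p := hmeq ▸ hmr
          have hdvd : p ∣ v - b0 := (Nat.modEq_iff_dvd' (show b0 ≤ v by omega)).mp hmr'
          have := Nat.le_of_dvd (by omega) hdvd
          omega
        have hvm : v ≤ m := by
          by_contra hc
          push_neg at hc
          have hdvd : p ∣ v - m := (Nat.modEq_iff_dvd' (le_of_lt hc)).mp hmr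
          have := Nat.le_of_dvd (by omega) hdvd
          omega
        have hvB : v ∈ B := downiter hp0 hdcN m (hCMB m hmCM) v hvm hmr.symm
        apply Finset.mem_insert_of_mem
        exact Finset.mem_erase.mpr ⟨by omega, hvB⟩
    · omega
    · rw [hfb]
      intro hmem
      rcases Finset.mem_insert.mp hmem with h|h
      · omega
      · exact absurd rfl (Finset.ne_of_mem_erase h)
  have hreg : ∀ b ∈ CM, b ≠ b0 → Regular p (f b) := by
    intro b hb hbne
    by_contra hnreg
    obtain ⟨hfb, hlf⟩ := hfbeta b hb
    obtain ⟨a, x, hrun, hxa, hxB⟩ := run_of_singular hp1 hlf hnreg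
    rw [hfb] at hxB
    have hb0le : b0 ≤ b := CM.min'_le b hb
    have hb0lt : b0 < b := lt_of_le_of_ne hb0le (Ne.symm hbne)
    have hab0 : a ≤ b0 := by
      obtain ⟨j, hj, hjr⟩ := rescover hp0 a (b0 % p) (Nat.mod_lt _ hp0)
      have hmem : a + j ∈ betaSet N (f b) := hrun j hj
      rw [hfb] at hmem
      have hneq : a + j ≠ b + p := by
        intro he
        have h3 : (b + p) % p = b % p := Nat.add_mod_right b p
        have hbb0 : b % p = b0 % p := by rw [← h3, ← he, hjr]
        exact hbne (hinj b hb b0 hb0CM hbb0)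
      have hajB : a + j ∈ B := by
        rcases Finset.mem_insert.mp hmem with h|h
        · exact absurd h hneq
        · exact Finset.mem_of_mem_erase h
      have := hCMmax b0 hb0CM (a + j) hajB (by rw [hjr])
      omega
    apply hxB
    obtain ⟨m, hmCM, hmr⟩ := hsurj (x % p) (Nat.mod_lt _ hp0)
    have hxm : x ≤ m := le_trans (show x ≤ b0 by omega) (CM.min'_le m hmCM)
    have hxBB : x ∈ B := downiter hp0 hdcN m (hCMB m hmCM) x hxm hmr.symm
    apply Finset.mem_insert_of_mem
    exact Finset.mem_erase.mpr ⟨by omega, hxBB⟩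
  refine ⟨?_, ?_, ?_, ?_⟩
  · have hSeq : {lam : PartitionNat | InBlock p 1 γ lam} = ↑(CM.image f) := by
      ext lam
      simp only [Set.mem_setOf_eq, Finset.coe_image, Set.mem_image, Finset.mem_coe]
      rw [hSmem lam]
    rw [hSeq, Set.ncard_coe_finset, Finset.card_image_of_injOn
      (fun a ha b hb hab => hfinj a ha b hb hab), hCMcard]
  · intro lam mu hl hm
    obtain ⟨a, ha, rfl⟩ := (hSmem lam).mp hl
    obtain ⟨b, hb, rfl⟩ := (hSmem mu).mp hm
    rcases le_total a b with h|h
    · exact Or.inl (hdom a ha b hb h)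
    · exact Or.inr (hdom b hb a ha h)
  · refine ⟨f b0, ⟨hfblock b0 hb0CM, hsing⟩, ?_⟩
    rintro lam ⟨hbl, hns⟩
    obtain ⟨b, hb, rfl⟩ := (hSmem lam).mp hbl
    rcases eq_or_ne b b0 with rfl|hne
    · rfl
    · exact absurd (hreg b hb hne) hns
  · intro lam hbl hns mu hmu
    obtain ⟨b, hb, rfl⟩ := (hSmem lam).mp hbl
    obtain ⟨b', hb', rfl⟩ := (hSmem mu).mp hmu
    have hbeq : b = b0 := by
      rcases eq_or_ne b b0 with h|hne
      · exact h
      · exact absurd (hreg b hb hne) hns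
    have hd := hdom b0 hb0CM b' hb' (CM.min'_le b' hb')
    rw [hbeq]
    exact hd

end ArxivW2
end

section
/- Let p be an odd prime and let λ be a self-conjugate partition of p-weight 2. Then none of the diagonal hook lengths h_λ(i,i) of λ is divisible by p; that is, every self-conjugate partition in a p-block of weight 2 is a p-BG-partition. -/
/-!
For self-conjugate `λ`, transposition maps nodes to nodes and preserves hook lengths, so the
nodes with hook length divisible by `p` come in transposed pairs off the diagonal. If two
diagonal hooks `h(c,c)`, `h(d,d)` are divisible by `p`, then so is `h(c,d)`, because
`h(c,c) + h(d,d) = 2 h(c,d)` and `p` is odd. Hence a diagonal node with hook divisible by `p`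
together with any second such node forces an off-diagonal pair as well: at least three nodes,
contradicting weight `2`.
-/

namespace ArxivW2

open PartitionNat

namespace PartitionNat

def hookDvdNodes (p : ℕ) (μ : PartitionNat) : Set (ℕ × ℕ) :=
  {x | μ.IsNode x.1 x.2 ∧ p ∣ μ.hook x.1 x.2}

theorem pweight_eq_ncard (p : ℕ) (μ : PartitionNat) :
    pweight p μ = (hookDvdNodes p μ).ncard := rfl

theorem IsNode.lt_conj {μ : PartitionNat} {i j : ℕ} (h : μ.IsNode i j) : i < μ.conj j := by
  have hsub : Set.Iic i ⊆ {k | j + 1 ≤ μ.part k} := fun k hk => h.trans_le (μ.antitone hk)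
  have hfin : {k | j + 1 ≤ μ.part k}.Finite :=
    μ.finite_support.subset fun k (hk : j + 1 ≤ μ.part k) => by
      simp only [Function.mem_support]; omega
  have hcard : (Set.Iic i).ncard = i + 1 := by
    rw [← Finset.coe_Iic, Set.ncard_coe_finset, Nat.card_Iic]
  have := Set.ncard_le_ncard hsub hfin
  unfold conj
  omega

namespace SelfConj

variable {μ : PartitionNat}

theorem conj_eq_part (hsc : SelfConj μ) (j : ℕ) : μ.conj j = μ.part j := (hsc j).symm

theorem isNode_swap (hsc : SelfConj μ) {i j : ℕ} (h : μ.IsNode i j) : μ.IsNode j i := by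
  unfold IsNode
  rw [hsc j]
  exact h.lt_conj

theorem hook_swap (hsc : SelfConj μ) (i j : ℕ) : μ.hook j i = μ.hook i j := by
  simp only [hook, hsc.conj_eq_part]
  omega

theorem hook_diag_add_hook_diag (hsc : SelfConj μ) {c d : ℕ} (hc : μ.IsNode c c)
    (hd : μ.IsNode d d) : μ.hook c c + μ.hook d d = 2 * μ.hook c d := by
  unfold IsNode at hc hd
  simp only [hook, hsc.conj_eq_part]
  omega

theorem swap_mem_hookDvdNodes (hsc : SelfConj μ) {p i j : ℕ} (h : (i, j) ∈ hookDvdNodes p μ) :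
    (j, i) ∈ hookDvdNodes p μ :=
  ⟨hsc.isNode_swap h.1, hsc.hook_swap i j ▸ h.2⟩

theorem mem_hookDvdNodes_of_diag (hsc : SelfConj μ) {p c d : ℕ} (hp : Odd p) (hcd : c ≤ d)
    (hc : (c, c) ∈ hookDvdNodes p μ) (hd : (d, d) ∈ hookDvdNodes p μ) :
    (c, d) ∈ hookDvdNodes p μ := by
  have hnode : μ.IsNode c d := hd.1.trans_le (μ.antitone hcd)
  have hdvd : p ∣ 2 * μ.hook c d :=
    hsc.hook_diag_add_hook_diag hc.1 hd.1 ▸ dvd_add hc.2 hd.2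
  exact ⟨hnode, hp.coprime_two_right.dvd_of_dvd_mul_left hdvd⟩

theorem exists_offDiag_mem_hookDvdNodes (hsc : SelfConj μ) {p a : ℕ} (hp : Odd p)
    (ha : (a, a) ∈ hookDvdNodes p μ) {z : ℕ × ℕ} (hz : z ∈ hookDvdNodes p μ)
    (hza : z ≠ (a, a)) : ∃ i j, i ≠ j ∧ (i, j) ∈ hookDvdNodes p μ := by
  obtain ⟨i, j⟩ := z
  by_cases hij : i = j
  · subst hij
    have hia : i ≠ a := fun h => hza (h ▸ rfl)
    rcases lt_or_gt_of_ne hia with h | h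
    · exact ⟨i, a, hia, hsc.mem_hookDvdNodes_of_diag hp h.le hz ha⟩
    · exact ⟨a, i, hia.symm, hsc.mem_hookDvdNodes_of_diag hp h.le ha hz⟩
  · exact ⟨i, j, hij, hz⟩

end SelfConj

end PartitionNat

open PartitionNat

theorem stmt16_general (p : ℕ) (hodd : Odd p)
    (lam : PartitionNat) (hsc : SelfConj lam) (hw : pweight p lam = 2) :
    ∀ i, lam.IsNode i i → ¬ p ∣ lam.hook i i := by
  intro a hnode hdvd
  rw [pweight_eq_ncard] at hw
  set S := hookDvdNodes p lam
  have ha : (a, a) ∈ S := ⟨hnode, hdvd⟩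
  obtain ⟨z, hz, hza⟩ := Set.exists_ne_of_one_lt_ncard (s := S) (by omega) (a, a)
  obtain ⟨i, j, hij, hmem⟩ := hsc.exists_offDiag_mem_hookDvdNodes hodd ha hz hza
  have : 2 < S.ncard := (Set.two_lt_ncard_iff (Set.finite_of_ncard_ne_zero (by omega))).2
    ⟨(a, a), (i, j), (j, i), ha, hmem, hsc.swap_mem_hookDvdNodes hmem,
      by grind, by grind, by grind⟩
  omega

/-- a self-conjugate partition of `p`-weight 2 has no diagonal hook
length divisible by `p`, i.e. it is a `p`-BG-partition. -/
theorem stmt16 (p : ℕ) (hp : p.Prime) (hodd : Odd p)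
    (lam : PartitionNat) (hsc : SelfConj lam) (hw : pweight p lam = 2) :
    ∀ i, lam.IsNode i i → ¬ p ∣ lam.hook i i :=
  stmt16_general p hodd lam hsc hw

end ArxivW2
end
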